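/- arXiv:1112.0184 — 11 statements merged into one kernel-verified Lean document; each statement's English description precedes it below -/
import Mathlib

section
/- Let ε ≥ 0, let M* be a maximum matching of a graph G, and let M be a maximal matching with |M| ≤ (1/2 + ε)|M*|. Then M contains at least (1/2 − 3ε)|M*| edges that are 3-augmentable, i.e., edges e ∈ M such that removing e from M allows the insertion of two edges of M* \ M into M while remaining a matching. -/
/-- A matching of `G` given as a finite set of edges: all edges belong to `G`,
and no two distinct edges share a vertex. -/
def IsMatching {V : Type*} (G : SimpleGraph V) (M : Finset (Sym2 V)) : Prop :=
  (M : Set (Sym2 V)) ⊆ G.edgeSet ∧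
    ∀ e ∈ M, ∀ f ∈ M, e ≠ f → ∀ v : V, v ∈ e → v ∉ f

/-- A maximal matching: no edge of `G` can be added. -/
def IsMaximalMatching {V : Type*} [DecidableEq V] (G : SimpleGraph V)
    (M : Finset (Sym2 V)) : Prop :=
  IsMatching G M ∧ ∀ e ∈ G.edgeSet, e ∉ M → ¬ IsMatching G (insert e M)

/-- A maximum matching: of largest cardinality. -/
def IsMaximumMatching {V : Type*} (G : SimpleGraph V) (M : Finset (Sym2 V)) : Prop :=
  IsMatching G M ∧ ∀ N : Finset (Sym2 V), IsMatching G N → N.card ≤ M.card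

/-- An edge `e ∈ M` is 3-augmentable (w.r.t. the maximum matching `M*`):
removing `e` from `M` allows the insertion of two edges of `M* \ M`
while remaining a matching. -/
def ThreeAugmentable {V : Type*} [DecidableEq V] (G : SimpleGraph V)
    (Mstar M : Finset (Sym2 V)) (e : Sym2 V) : Prop :=
  e ∈ M ∧ ∃ f ∈ Mstar, f ∉ M ∧ ∃ g ∈ Mstar, g ∉ M ∧ f ≠ g ∧
    IsMatching G (insert f (insert g (M.erase e)))

open scoped Classical

/-- two sym2's share a vertex -/
def SymAdj {V : Type*} (e f : Sym2 V) : Prop := ∃ v, v ∈ e ∧ v ∈ f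

lemma symAdj_comm {V : Type*} {e f : Sym2 V} : SymAdj e f ↔ SymAdj f e := by
  constructor <;> rintro ⟨v, h1, h2⟩ <;> exact ⟨v, h2, h1⟩

/-- in a matching, distinct edges are not adjacent -/
lemma matching_not_adj {V : Type*} {G : SimpleGraph V} {M : Finset (Sym2 V)}
    (h : IsMatching G M) {e f : Sym2 V} (he : e ∈ M) (hf : f ∈ M) (hne : e ≠ f) :
    ¬ SymAdj e f := by
  rintro ⟨v, h1, h2⟩
  exact h.2 e he f hf hne v h1 h2

/-- maximality gives each outside edge a neighbor in M -/
lemma exists_nb {V : Type*} [DecidableEq V] {G : SimpleGraph V} {M : Finset (Sym2 V)}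
    (hM : IsMaximalMatching G M) {f : Sym2 V} (hfG : f ∈ G.edgeSet) (hfM : f ∉ M) :
    ∃ e ∈ M, SymAdj e f := by
  by_contra hcon
  push_neg at hcon
  apply hM.2 f hfG hfM
  constructor
  · intro x hx
    simp only [Finset.coe_insert, Set.mem_insert_iff] at hx
    rcases hx with rfl | hx
    · exact hfG
    · exact hM.1.1 hx
  · intro e1 he1 e2 he2 hne v hv1 hv2
    simp only [Finset.mem_insert] at he1 he2
    rcases he1 with rfl | he1 <;> rcases he2 with rfl | he2
    · exact hne rfl
    · exact hcon e2 he2 ⟨v, hv2, hv1⟩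
    · exact hcon e1 he1 ⟨v, hv1, hv2⟩
    · exact hM.1.2 e1 he1 e2 he2 hne v hv1 hv2

/-- an edge of a matching is adjacent to at most 2 edges of another matching -/
lemma nb_card_le_two {V : Type*} [DecidableEq V] {G : SimpleGraph V}
    {N : Finset (Sym2 V)} (hN : IsMatching G N) {e : Sym2 V} (heG : e ∈ G.edgeSet)
    (D : Finset (Sym2 V)) (hD : D ⊆ N) :
    (D.filter (fun f => SymAdj e f)).card ≤ 2 := by
  induction e using Sym2.ind with
  | _ a b =>
    have hab : a ≠ b := (G.mem_edgeSet.mp heG).ne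
    have : (D.filter (fun f => SymAdj s(a, b) f)).card ≤ ({a, b} : Finset V).card := by
      apply Finset.card_le_card_of_injOn (fun f => if a ∈ f then a else b)
      · intro f hf
        simp only [Finset.mem_insert, Finset.mem_singleton]
        split <;> simp
      · intro f hf g hg hfg
        simp only [Finset.coe_filter, Set.mem_setOf_eq] at hf hg
        by_contra hne
        -- the common value v is a member of both f and g
        have hvf : (if a ∈ f then a else b) ∈ f := by
          split
          · assumption
          · obtain ⟨v, hv1, hv2⟩ := hf.2
            rcases Sym2.mem_iff.mp hv1 with rfl | rfl
            · tauto
            · exact hv2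
        have hvg : (if a ∈ g then a else b) ∈ g := by
          split
          · assumption
          · obtain ⟨v, hv1, hv2⟩ := hg.2
            rcases Sym2.mem_iff.mp hv1 with rfl | rfl
            · tauto
            · exact hv2
        simp only at hfg
        rw [hfg] at hvf
        exact matching_not_adj hN (hD hg.1) (hD hf.1) (Ne.symm hne)
          ⟨_, hvg, hvf⟩
    calc _ ≤ _ := this
    _ ≤ 2 := Finset.card_insert_le _ _ |>.trans (by simp)

lemma private_three_aug {V : Type*} [DecidableEq V] {G : SimpleGraph V}
    {Mstar M : Finset (Sym2 V)} (hMs : IsMatching G Mstar) (hMm : IsMatching G M)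
    {e f g : Sym2 V} (he : e ∈ M) (hf : f ∈ Mstar) (hfM : f ∉ M) (hg : g ∈ Mstar)
    (hgM : g ∉ M) (hfg : f ≠ g)
    (hfp : ∀ e' ∈ M, SymAdj e' f → e' = e) (hgp : ∀ e' ∈ M, SymAdj e' g → e' = e) :
    ThreeAugmentable G Mstar M e := by
  refine ⟨he, f, hf, hfM, g, hg, hgM, hfg, ?_, ?_⟩
  · intro x hx
    simp only [Finset.coe_insert, Set.mem_insert_iff, Finset.mem_coe] at hx
    rcases hx with rfl | rfl | hx
    · exact hMs.1 hf
    · exact hMs.1 hg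
    · exact hMm.1 (Finset.mem_of_mem_erase hx)
  · intro x hx y hy hne v hvx hvy
    simp only [Finset.mem_insert] at hx hy
    have key : ∀ z w : Sym2 V, (z = f ∨ z = g ∨ z ∈ M.erase e) →
        (w = f ∨ w = g ∨ w ∈ M.erase e) → z ≠ w → ¬ SymAdj z w := by
      rintro z w (rfl | rfl | hz) (rfl | rfl | hw) hzw
      · exact absurd rfl hzw
      · exact matching_not_adj hMs hf hg hfg
      · rintro ⟨v, hv1, hv2⟩
        exact (Finset.ne_of_mem_erase hw)
          (hfp w (Finset.mem_of_mem_erase hw) ⟨v, hv2, hv1⟩)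
      · exact matching_not_adj hMs hg hf (Ne.symm hfg)
      · exact absurd rfl hzw
      · rintro ⟨v, hv1, hv2⟩
        exact (Finset.ne_of_mem_erase hw)
          (hgp w (Finset.mem_of_mem_erase hw) ⟨v, hv2, hv1⟩)
      · rintro ⟨v, hv1, hv2⟩
        exact (Finset.ne_of_mem_erase hz)
          (hfp z (Finset.mem_of_mem_erase hz) ⟨v, hv1, hv2⟩)
      · rintro ⟨v, hv1, hv2⟩
        exact (Finset.ne_of_mem_erase hz)
          (hgp z (Finset.mem_of_mem_erase hz) ⟨v, hv1, hv2⟩)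
      · exact matching_not_adj hMm (Finset.mem_of_mem_erase hz)
          (Finset.mem_of_mem_erase hw) hzw
    exact key x y hx hy hne ⟨v, hvx, hvy⟩

/-- If `M` is a maximal matching with `|M| ≤ (1/2 + ε)|M*|`, then `M` contains at least
`(1/2 − 3ε)|M*|` edges that are 3-augmentable. -/
theorem three_augmentable_count {V : Type*} [DecidableEq V] (G : SimpleGraph V)
    (Mstar M : Finset (Sym2 V)) (ε : ℝ) (hε : 0 ≤ ε)
    (hMstar : IsMaximumMatching G Mstar) (hM : IsMaximalMatching G M)
    (hcard : (M.card : ℝ) ≤ (1 / 2 + ε) * (Mstar.card : ℝ)) :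
    (1 / 2 - 3 * ε) * (Mstar.card : ℝ) ≤
      ({e : Sym2 V | ThreeAugmentable G Mstar M e}.ncard : ℝ) := by
  classical
  obtain ⟨hMs, -⟩ := hMstar
  have hMm : IsMatching G M := hM.1
  set D : Finset (Sym2 V) := Mstar \ M with hDdef
  set Nb : Sym2 V → Finset (Sym2 V) := fun f => M.filter (fun e => SymAdj e f) with hNbdef
  set P : Sym2 V → Finset (Sym2 V) :=
    fun e => D.filter (fun f => ∀ e' ∈ M, SymAdj e' f → e' = e) with hPdef
  set D1 : Finset (Sym2 V) := D.filter (fun f => (Nb f).card = 1) with hD1def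
  set A : Finset (Sym2 V) := (M \ Mstar).filter (fun e => 2 ≤ (P e).card) with hAdef
  -- F0: every f ∈ D has a neighbor in M
  have hF0 : ∀ f ∈ D, 1 ≤ (Nb f).card := by
    intro f hfD
    rw [hDdef, Finset.mem_sdiff] at hfD
    obtain ⟨e0, he0, hadj⟩ := exists_nb hM (hMs.1 hfD.1) hfD.2
    have : e0 ∈ Nb f := Finset.mem_filter.mpr ⟨he0, hadj⟩
    exact Finset.card_pos.mpr ⟨e0, this⟩
  -- (c): 2 * |D| ≤ I + |D1|
  have hc : 2 * D.card ≤ (∑ f ∈ D, (Nb f).card) + D1.card := by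
    have : ∑ f ∈ D, 2 ≤ ∑ f ∈ D, ((Nb f).card + if (Nb f).card = 1 then 1 else 0) := by
      apply Finset.sum_le_sum
      intro f hf
      by_cases h1 : (Nb f).card = 1
      · simp [h1]
      · simp only [h1, if_false, add_zero]
        have := hF0 f hf
        omega
    rw [Finset.sum_const, smul_eq_mul, mul_comm] at this
    rw [Finset.sum_add_distrib] at this
    have hcnt : ∑ f ∈ D, (if (Nb f).card = 1 then 1 else 0) = D1.card := by
      rw [hD1def, Finset.card_filter]
    omega
  -- double counting: I = sum over M
  have hdc : (∑ f ∈ D, (Nb f).card) = ∑ e ∈ M, (D.filter (fun f => SymAdj e f)).card := by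
    simp only [hNbdef, Finset.card_filter]
    exact Finset.sum_comm
  -- edges of M ∩ Mstar have no D-neighbors
  have hzero : ∀ e ∈ M, e ∈ Mstar → (D.filter (fun f => SymAdj e f)).card = 0 := by
    intro e heM heS
    rw [Finset.card_eq_zero, Finset.filter_eq_empty_iff]
    intro f hfD
    rw [hDdef, Finset.mem_sdiff] at hfD
    exact matching_not_adj hMs heS hfD.1 (fun h => hfD.2 (h ▸ heM))
  -- (d): I ≤ 2 * |M \ Mstar|
  have hd : (∑ f ∈ D, (Nb f).card) ≤ 2 * (M \ Mstar).card := by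
    rw [hdc]
    have heq : ∑ e ∈ M, (D.filter (fun f => SymAdj e f)).card
        = ∑ e ∈ M \ Mstar, (D.filter (fun f => SymAdj e f)).card := by
      refine (Finset.sum_subset (Finset.sdiff_subset) ?_).symm
      intro e heM hn
      rw [Finset.mem_sdiff] at hn
      push_neg at hn
      exact hzero e heM (hn heM)
    rw [heq]
    calc ∑ e ∈ M \ Mstar, (D.filter (fun f => SymAdj e f)).card
        ≤ ∑ _e ∈ M \ Mstar, 2 := by
          apply Finset.sum_le_sum
          intro e he
          exact nb_card_le_two hMs (hMm.1 (Finset.mem_sdiff.mp he).1)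
            D (hDdef ▸ Finset.sdiff_subset)
      _ = 2 * (M \ Mstar).card := by rw [Finset.sum_const, smul_eq_mul, mul_comm]
  -- (b): |D1| ≤ ∑_{e ∈ M \ Mstar} |P e|
  have hb : D1.card ≤ ∑ e ∈ M \ Mstar, (P e).card := by
    have hsub : D1 ⊆ (M \ Mstar).biUnion P := by
      intro f hf
      rw [hD1def, Finset.mem_filter] at hf
      obtain ⟨hfD, hcard1⟩ := hf
      obtain ⟨e0, he0⟩ := Finset.card_eq_one.mp hcard1
      have he0mem : e0 ∈ Nb f := he0 ▸ Finset.mem_singleton_self e0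
      rw [hNbdef] at he0mem
      simp only [Finset.mem_filter] at he0mem
      obtain ⟨he0M, he0adj⟩ := he0mem
      have he0nS : e0 ∉ Mstar := by
        intro he0S
        have hfD' := hDdef ▸ hfD
        rw [Finset.mem_sdiff] at hfD'
        exact matching_not_adj hMs he0S hfD'.1 (fun h => hfD'.2 (h ▸ he0M)) he0adj
      apply Finset.mem_biUnion.mpr
      refine ⟨e0, Finset.mem_sdiff.mpr ⟨he0M, he0nS⟩, ?_⟩
      rw [hPdef]
      refine Finset.mem_filter.mpr ⟨hfD, ?_⟩
      intro e' he'M hadj'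
      have : e' ∈ Nb f := Finset.mem_filter.mpr ⟨he'M, hadj'⟩
      rw [he0] at this
      exact Finset.mem_singleton.mp this
    exact le_trans (Finset.card_le_card hsub) (Finset.card_biUnion_le)
  -- P e ≤ 2, and ≤ 1 off A
  have hPsub : ∀ e ∈ M, P e ⊆ D.filter (fun f => SymAdj e f) := by
    intro e heM f hf
    rw [hPdef, Finset.mem_filter] at hf
    obtain ⟨hfD, hfp⟩ := hf
    have h1 := hF0 f hfD
    obtain ⟨e1, he1⟩ := Finset.card_pos.mp h1
    rw [hNbdef] at he1
    simp only [Finset.mem_filter] at he1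
    have := hfp e1 he1.1 he1.2
    refine Finset.mem_filter.mpr ⟨hfD, this ▸ he1.2⟩
  -- (a)
  have ha : ∑ e ∈ M \ Mstar, (P e).card ≤ A.card + (M \ Mstar).card := by
    have : ∑ e ∈ M \ Mstar, (P e).card
        ≤ ∑ e ∈ M \ Mstar, ((if 2 ≤ (P e).card then 1 else 0) + 1) := by
      apply Finset.sum_le_sum
      intro e he
      have heM : e ∈ M := (Finset.mem_sdiff.mp he).1
      by_cases h2 : 2 ≤ (P e).card
      · have hle2 : (P e).card ≤ 2 := by
          calc (P e).card ≤ (D.filter (fun f => SymAdj e f)).card :=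
                Finset.card_le_card (hPsub e heM)
            _ ≤ 2 := nb_card_le_two hMs (hMm.1 heM) D (hDdef ▸ Finset.sdiff_subset)
        simp only [h2, if_true]
        omega
      · simp only [h2, if_false, zero_add]
        omega
    rw [Finset.sum_add_distrib, Finset.sum_const, smul_eq_mul, mul_one] at this
    have hcnt : ∑ e ∈ M \ Mstar, (if 2 ≤ (P e).card then 1 else 0) = A.card := by
      rw [hAdef, Finset.card_filter]
    omega
  -- combine: 2 * |Mstar| ≤ |A| + 3 * |M|
  have hmain : 2 * Mstar.card ≤ A.card + 3 * M.card := by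
    have h1 : D.card + (Mstar ∩ M).card = Mstar.card := by
      rw [hDdef]; exact Finset.card_sdiff_add_card_inter Mstar M
    have h2 : (M \ Mstar).card + (M ∩ Mstar).card = M.card :=
      Finset.card_sdiff_add_card_inter M Mstar
    have h3 : (Mstar ∩ M).card = (M ∩ Mstar).card := by rw [Finset.inter_comm]
    omega
  -- A consists of 3-augmentable edges
  have hA3 : (A : Set (Sym2 V)) ⊆ {e : Sym2 V | ThreeAugmentable G Mstar M e} := by
    intro e he
    rw [Finset.mem_coe, hAdef, Finset.mem_filter] at he
    obtain ⟨heMS, h2⟩ := he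
    have heM : e ∈ M := (Finset.mem_sdiff.mp heMS).1
    obtain ⟨f, hf, g, hg, hfg⟩ := Finset.one_lt_card.mp (by omega : 1 < (P e).card)
    rw [hPdef, Finset.mem_filter] at hf hg
    have hfD := Finset.mem_sdiff.mp (hDdef ▸ hf.1)
    have hgD := Finset.mem_sdiff.mp (hDdef ▸ hg.1)
    exact private_three_aug hMs hMm heM hfD.1 hfD.2 hgD.1 hgD.2 hfg hf.2 hg.2
  -- finiteness of the target set
  have hTsub : {e : Sym2 V | ThreeAugmentable G Mstar M e} ⊆ (M : Set (Sym2 V)) := by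
    intro e he; exact he.1
  have hfin : {e : Sym2 V | ThreeAugmentable G Mstar M e}.Finite :=
    Set.Finite.subset (M.finite_toSet) hTsub
  have hncard : A.card ≤ {e : Sym2 V | ThreeAugmentable G Mstar M e}.ncard := by
    rw [← Set.ncard_coe_finset A]
    exact Set.ncard_le_ncard hA3 hfin
  -- final arithmetic
  have hR : (2 : ℝ) * Mstar.card ≤ (A.card : ℝ) + 3 * M.card := by
    exact_mod_cast hmain
  have hR2 : (A.card : ℝ) ≤ ({e : Sym2 V | ThreeAugmentable G Mstar M e}.ncard : ℝ) := by
    exact_mod_cast hncard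
  nlinarith [hcard, hR, hR2]
end

section
/- Let M be a maximal matching and M* a maximum matching of a graph G, and for i ≥ 1 let k_{2i+1} be the number of connected components of M ⊕ M* that are paths with 2i+1 edges. Then |M*| − |M| ≤ (1/2)·k₃ + (1/2)|M|, where k₃ is the number of length-3 paths. -/
/-- The connected component `c` of `H` is a path with `n` edges: its vertex set is the
support of a path of length `n` in `H`, and every edge of `H` inside that support is an
edge of the path. -/
def IsPathComponent {V : Type*} (H : SimpleGraph V) (c : H.ConnectedComponent)
    (n : ℕ) : Prop :=
  ∃ (u v : V) (w : H.Walk u v), w.IsPath ∧ w.length = n ∧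
    (∀ x : V, H.connectedComponentMk x = c ↔ x ∈ w.support) ∧
    (∀ e ∈ H.edgeSet, (∀ x : V, x ∈ e → x ∈ w.support) → e ∈ w.edges)

open Finset

namespace SimpleGraph

variable {V : Type*} {H : SimpleGraph V}

lemma connectedComponentMk_eq_of_mem_edgeSet {e : Sym2 V} (he : e ∈ H.edgeSet) {a b : V}
    (ha : a ∈ e) (hb : b ∈ e) : H.connectedComponentMk a = H.connectedComponentMk b := by
  induction e using Sym2.ind with
  | h p q =>
    have hpq := ConnectedComponent.connectedComponentMk_eq_of_adj (G := H) he
    rcases Sym2.mem_iff.mp ha with rfl | rfl <;> rcases Sym2.mem_iff.mp hb with rfl | rfl <;>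
      simp [hpq]

/-- Junk unless `e ∈ H.edgeSet`: it is the component of an arbitrary endpoint of `e`. -/
noncomputable def edgeComponent (H : SimpleGraph V) (e : Sym2 V) : H.ConnectedComponent :=
  H.connectedComponentMk e.out.1

lemma edgeComponent_eq {e : Sym2 V} (he : e ∈ H.edgeSet) {v : V} (hv : v ∈ e) :
    H.edgeComponent e = H.connectedComponentMk v :=
  connectedComponentMk_eq_of_mem_edgeSet he (Sym2.out_fst_mem e) hv

open Classical in
noncomputable def ConnectedComponent.edgesIn (c : H.ConnectedComponent) (F : Finset (Sym2 V)) :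
    Finset (Sym2 V) :=
  {e ∈ F | H.edgeComponent e = c}

lemma ConnectedComponent.mem_edgesIn {c : H.ConnectedComponent} {F : Finset (Sym2 V)}
    {e : Sym2 V} : e ∈ c.edgesIn F ↔ e ∈ F ∧ H.edgeComponent e = c := by
  classical
  simp [ConnectedComponent.edgesIn]

lemma ConnectedComponent.edgesIn_subset (c : H.ConnectedComponent) (F : Finset (Sym2 V)) :
    c.edgesIn F ⊆ F :=
  fun _ he => (mem_edgesIn.mp he).1

namespace Walk.IsPath

variable [Finite V] {x y : V} {P : H.Walk x y} (hP : P.IsPath) (hxy : x ≠ y)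
  (hx : (H.neighborSet x).Subsingleton) (hy : (H.neighborSet y).Subsingleton)
  (hdeg : ∀ v, (H.neighborSet v).ncard ≤ 2)
include hP hxy hx hy hdeg

lemma toSubgraph_neighborSet_eq {w : V} (hw : w ∈ P.support) :
    P.toSubgraph.neighborSet w = H.neighborSet w := by
  have hnil : ¬ P.Nil := Walk.not_nil_of_ne hxy
  refine Set.eq_of_subset_of_ncard_le (P.toSubgraph.neighborSet_subset w) ?_
  obtain ⟨i, rfl, hi⟩ := Walk.mem_support_iff_exists_getVert.mp hw
  rcases Nat.eq_zero_or_pos i with rfl | hi0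
  · rw [Walk.getVert_zero, hP.neighborSet_toSubgraph_startpoint hnil, Set.ncard_singleton]
    exact Set.ncard_le_one_iff_subsingleton.mpr hx
  rcases hi.eq_or_lt with rfl | hlt
  · rw [Walk.getVert_length, hP.neighborSet_toSubgraph_endpoint hnil, Set.ncard_singleton]
    exact Set.ncard_le_one_iff_subsingleton.mpr hy
  · rw [hP.ncard_neighborSet_toSubgraph_internal_eq_two hi0.ne' hlt]
    exact hdeg _

lemma mk_mem_edges_of_adj {w u : V} (hw : w ∈ P.support) (hadj : H.Adj w u) :
    s(w, u) ∈ P.edges := by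
  rw [← Walk.adj_toSubgraph_iff_mem_edges, ← Subgraph.mem_neighborSet,
    hP.toSubgraph_neighborSet_eq hxy hx hy hdeg hw]
  exact hadj

lemma mem_support_of_reachable {v : V} (h : H.Reachable x v) : v ∈ P.support := by
  obtain ⟨Q⟩ := h
  by_contra hv
  obtain ⟨d, -, hd, hd'⟩ := Q.exists_boundary_dart {w | w ∈ P.support} P.start_mem_support hv
  exact hd' (P.snd_mem_support_of_mem_edges (hP.mk_mem_edges_of_adj hxy hx hy hdeg hd d.adj))

lemma mem_support_iff {v : V} :
    v ∈ P.support ↔ H.connectedComponentMk v = H.connectedComponentMk x := by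
  classical
  exact ⟨fun hv => ConnectedComponent.sound (P.takeUntil v hv).reachable.symm,
    fun hv => hP.mem_support_of_reachable hxy hx hy hdeg (ConnectedComponent.exact hv).symm⟩

lemma isPathComponent : IsPathComponent H (H.connectedComponentMk x) P.length := by
  refine ⟨x, y, P, hP, rfl, fun v => (hP.mem_support_iff hxy hx hy hdeg).symm, ?_⟩
  intro e he hsub
  induction e using Sym2.ind with
  | h a b => exact hP.mk_mem_edges_of_adj hxy hx hy hdeg (hsub a (Sym2.mem_mk_left a b)) he

lemma mem_edges_iff {e : Sym2 V} :
    e ∈ P.edges ↔ e ∈ H.edgeSet ∧ H.edgeComponent e = H.connectedComponentMk x := by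
  induction e using Sym2.ind with
  | h a b =>
    refine ⟨fun h => ⟨P.edges_subset_edgeSet h, ?_⟩, fun ⟨he, hc⟩ => ?_⟩
    · rw [edgeComponent_eq (P.edges_subset_edgeSet h) (Sym2.mem_mk_left a b),
        ← hP.mem_support_iff hxy hx hy hdeg]
      exact P.fst_mem_support_of_mem_edges h
    · rw [edgeComponent_eq he (Sym2.mem_mk_left a b), ← hP.mem_support_iff hxy hx hy hdeg] at hc
      exact hP.mk_mem_edges_of_adj hxy hx hy hdeg hc he

end Walk.IsPath

/-- In a graph of maximum degree two, a connected component contains at most two leaves. -/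
lemma eq_of_reachable_of_neighborSet_subsingleton [Finite V]
    (hdeg : ∀ v, (H.neighborSet v).ncard ≤ 2) {x y z : V}
    (hx : (H.neighborSet x).Subsingleton) (hy : (H.neighborSet y).Subsingleton)
    (hz : (H.neighborSet z).Subsingleton) (hxy : x ≠ y) (hzx : z ≠ x)
    (hrxy : H.Reachable x y) (hrxz : H.Reachable x z) : z = y := by
  obtain ⟨P, hP⟩ := hrxy.exists_isPath
  by_contra hzy
  exact hP.isTrail.not_mem_support_of_subsingleton_neighborSet hzx hzy hz
    (hP.mem_support_of_reachable hxy hx hy hdeg hrxz)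

end SimpleGraph

open SimpleGraph

section Matching

variable {V : Type*} {G : SimpleGraph V} {M N : Finset (Sym2 V)}

lemma IsMatching.eq_of_mem_of_mem (hM : IsMatching G M) {e f : Sym2 V} {v : V} (he : e ∈ M)
    (hf : f ∈ M) (hve : v ∈ e) (hvf : v ∈ f) : e = f :=
  by_contra fun hne => hM.2 e he f hf hne v hve hvf

lemma IsMatching.subsingleton_setOf_mk_mem (hM : IsMatching G M) (v : V) :
    {u | s(v, u) ∈ M}.Subsingleton := fun _ ha _ hb =>
  Sym2.congr_right.mp (hM.eq_of_mem_of_mem ha hb (Sym2.mem_mk_left _ _) (Sym2.mem_mk_left _ _))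

lemma IsMatching.card_biUnion_toFinset [DecidableEq V] (hM : IsMatching G M)
    {F : Finset (Sym2 V)} (hF : F ⊆ M) : #(F.biUnion Sym2.toFinset) = 2 * #F := by
  rw [card_biUnion, sum_const_nat (m := 2), mul_comm]
  · exact fun e he =>
      Sym2.card_toFinset_of_not_isDiag e (G.not_isDiag_of_mem_edgeSet (hM.1 (hF he)))
  · intro e he f hf hef
    rw [Function.onFun, Finset.disjoint_left]
    intro v hve hvf
    exact hef (hM.eq_of_mem_of_mem (hF he) (hF hf) (Sym2.mem_toFinset.mp hve)
      (Sym2.mem_toFinset.mp hvf))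

lemma IsMaximalMatching.exists_mem_of_notMem [DecidableEq V] (hM : IsMaximalMatching G M)
    {e : Sym2 V} (he : e ∈ G.edgeSet) (heM : e ∉ M) : ∃ v ∈ e, ∃ f ∈ M, v ∈ f := by
  by_contra! h
  refine hM.2 e he heM ⟨?_, ?_⟩
  · rw [coe_insert]
    exact Set.insert_subset he hM.1.1
  · intro f hf g hg hfg v hvf hvg
    rw [mem_insert] at hf hg
    rcases hf with rfl | hf <;> rcases hg with rfl | hg
    · exact hfg rfl
    · exact h v hvf g hg hvg
    · exact h v hvg f hf hvf
    · exact hM.1.2 f hf g hg hfg v hvf hvg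

def symmDiffGraph (M N : Finset (Sym2 V)) : SimpleGraph V :=
  SimpleGraph.fromEdgeSet ((M : Set (Sym2 V)) \ N ∪ (N : Set (Sym2 V)) \ M)

lemma mem_edgeSet_symmDiffGraph [DecidableEq V] (hM : IsMatching G M) (hN : IsMatching G N)
    {e : Sym2 V} : e ∈ (symmDiffGraph M N).edgeSet ↔ e ∈ M \ N ∨ e ∈ N \ M := by
  simp only [symmDiffGraph, edgeSet_fromEdgeSet, Set.mem_sdiff, Set.mem_union, mem_coe,
    mem_sdiff, Sym2.mem_diagSet]
  refine ⟨And.left, fun h => ⟨h, ?_⟩⟩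
  rcases h with ⟨he, -⟩ | ⟨he, -⟩
  · exact G.not_isDiag_of_mem_edgeSet (hM.1 he)
  · exact G.not_isDiag_of_mem_edgeSet (hN.1 he)

lemma neighborSet_symmDiffGraph_subset (v : V) :
    (symmDiffGraph M N).neighborSet v ⊆ {u | s(v, u) ∈ M} ∪ {u | s(v, u) ∈ N} := by
  intro u hu
  rw [mem_neighborSet, symmDiffGraph, fromEdgeSet_adj] at hu
  rcases hu.1 with ⟨h, -⟩ | ⟨h, -⟩
  · exact Or.inl h
  · exact Or.inr h

lemma ncard_neighborSet_symmDiffGraph_le_two [Finite V] (hM : IsMatching G M)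
    (hN : IsMatching G N) (v : V) : ((symmDiffGraph M N).neighborSet v).ncard ≤ 2 :=
  calc ((symmDiffGraph M N).neighborSet v).ncard
      ≤ ({u | s(v, u) ∈ M} ∪ {u | s(v, u) ∈ N}).ncard :=
        Set.ncard_le_ncard (neighborSet_symmDiffGraph_subset v)
    _ ≤ {u | s(v, u) ∈ M}.ncard + {u | s(v, u) ∈ N}.ncard := Set.ncard_union_le _ _
    _ ≤ 1 + 1 := add_le_add
        (Set.ncard_le_one_iff_subsingleton.mpr (hM.subsingleton_setOf_mk_mem v))
        (Set.ncard_le_one_iff_subsingleton.mpr (hN.subsingleton_setOf_mk_mem v))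

lemma neighborSet_symmDiffGraph_subsingleton (hN : IsMatching G N) {v : V}
    (hv : ∀ e ∈ M, v ∉ e) : ((symmDiffGraph M N).neighborSet v).Subsingleton :=
  (hN.subsingleton_setOf_mk_mem v).anti fun u hu =>
    (neighborSet_symmDiffGraph_subset v hu).resolve_left fun h => hv _ h (Sym2.mem_mk_left v u)

end Matching

section Counting

variable {V : Type*} [DecidableEq V] {G : SimpleGraph V} {M N : Finset (Sym2 V)}

noncomputable def SimpleGraph.ConnectedComponent.coveredVerts {H : SimpleGraph V}
    (c : H.ConnectedComponent) (F : Finset (Sym2 V)) : Finset V :=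
  (c.edgesIn F).biUnion Sym2.toFinset

lemma SimpleGraph.ConnectedComponent.mem_coveredVerts {H : SimpleGraph V}
    {c : H.ConnectedComponent} {F : Finset (Sym2 V)} {v : V} :
    v ∈ c.coveredVerts F ↔ ∃ e ∈ F, H.edgeComponent e = c ∧ v ∈ e := by
  simp [ConnectedComponent.coveredVerts, ConnectedComponent.mem_edgesIn, and_assoc]

lemma IsMatching.card_coveredVerts {H : SimpleGraph V} (hM : IsMatching G M)
    (c : H.ConnectedComponent) {F : Finset (Sym2 V)} (hF : F ⊆ M) :
    #(c.coveredVerts F) = 2 * #(c.edgesIn F) :=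
  hM.card_biUnion_toFinset ((c.edgesIn_subset F).trans hF)

variable (c : (symmDiffGraph M N).ConnectedComponent)

lemma eq_and_unmatched_of_mem_sdiff (hM : IsMatching G M) (hN : IsMatching G N) {v : V}
    (hv : v ∈ c.coveredVerts (N \ M) \ c.coveredVerts (M \ N)) :
    (symmDiffGraph M N).connectedComponentMk v = c ∧ ∀ f ∈ M, v ∉ f := by
  rw [mem_sdiff, ConnectedComponent.mem_coveredVerts, ConnectedComponent.mem_coveredVerts] at hv
  obtain ⟨⟨e, heNM, hec, hve⟩, hvB⟩ := hv
  have heH := (mem_edgeSet_symmDiffGraph hM hN).mpr (Or.inr heNM)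
  have hvc : (symmDiffGraph M N).connectedComponentMk v = c :=
    (edgeComponent_eq heH hve).symm.trans hec
  refine ⟨hvc, fun f hfM hvf => ?_⟩
  by_cases hfN : f ∈ N
  · exact (mem_sdiff.mp heNM).2 (hN.eq_of_mem_of_mem hfN (mem_sdiff.mp heNM).1 hvf hve ▸ hfM)
  · have hfMN : f ∈ M \ N := mem_sdiff.mpr ⟨hfM, hfN⟩
    have hfH := (mem_edgeSet_symmDiffGraph hM hN).mpr (Or.inl hfMN)
    exact hvB ⟨f, hfMN, (edgeComponent_eq hfH hvf).trans hvc, hvf⟩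

lemma card_coveredVerts_sdiff_le_two [Finite V] (hM : IsMatching G M) (hN : IsMatching G N) :
    #(c.coveredVerts (N \ M) \ c.coveredVerts (M \ N)) ≤ 2 := by
  by_contra! h
  obtain ⟨x, hx, y, hy, z, hz, hxy, hxz, hyz⟩ := two_lt_card.mp h
  obtain ⟨hxc, hxM⟩ := eq_and_unmatched_of_mem_sdiff c hM hN hx
  obtain ⟨hyc, hyM⟩ := eq_and_unmatched_of_mem_sdiff c hM hN hy
  obtain ⟨hzc, hzM⟩ := eq_and_unmatched_of_mem_sdiff c hM hN hz
  exact hyz.symm <| eq_of_reachable_of_neighborSet_subsingleton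
    (ncard_neighborSet_symmDiffGraph_le_two hM hN)
    (neighborSet_symmDiffGraph_subsingleton hN hxM) (neighborSet_symmDiffGraph_subsingleton hN hyM)
    (neighborSet_symmDiffGraph_subsingleton hN hzM) hxy hxz.symm
    (ConnectedComponent.exact (hxc.trans hyc.symm)) (ConnectedComponent.exact (hxc.trans hzc.symm))

lemma card_edgesIn_le_add_one [Finite V] (hM : IsMatching G M) (hN : IsMatching G N) :
    #(c.edgesIn (N \ M)) ≤ #(c.edgesIn (M \ N)) + 1 := by
  have hA := hN.card_coveredVerts c (sdiff_subset (s := N) (t := M))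
  have hB := hM.card_coveredVerts c (sdiff_subset (s := M) (t := N))
  have := card_le_card_sdiff_add_card (s := c.coveredVerts (N \ M)) (t := c.coveredVerts (M \ N))
  have := card_coveredVerts_sdiff_le_two c hM hN
  omega

lemma edgesIn_eq_empty_of_isMaximalMatching (hM : IsMaximalMatching G M)
    (hN : IsMatching G N) (hB : c.edgesIn (M \ N) = ∅) : c.edgesIn (N \ M) = ∅ := by
  refine eq_empty_of_forall_notMem fun e he => ?_
  obtain ⟨heNM, hec⟩ := ConnectedComponent.mem_edgesIn.mp he
  obtain ⟨v, hve, f, hfM, hvf⟩ :=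
    hM.exists_mem_of_notMem (hN.1 (mem_sdiff.mp heNM).1) (mem_sdiff.mp heNM).2
  have hv : v ∈ c.coveredVerts (N \ M) \ c.coveredVerts (M \ N) := by
    refine mem_sdiff.mpr ⟨ConnectedComponent.mem_coveredVerts.mpr ⟨e, heNM, hec, hve⟩, ?_⟩
    simp [ConnectedComponent.coveredVerts, hB]
  exact (eq_and_unmatched_of_mem_sdiff c hM.1 hN hv).2 f hfM hvf

lemma isPathComponent_of_card_edgesIn_eq_add_one [Finite V] (hM : IsMatching G M)
    (hN : IsMatching G N) (h : #(c.edgesIn (N \ M)) = #(c.edgesIn (M \ N)) + 1) :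
    IsPathComponent (symmDiffGraph M N) c (#(c.edgesIn (N \ M)) + #(c.edgesIn (M \ N))) := by
  have hA := hN.card_coveredVerts c (sdiff_subset (s := N) (t := M))
  have hB := hM.card_coveredVerts c (sdiff_subset (s := M) (t := N))
  have := le_card_sdiff (c.coveredVerts (M \ N)) (c.coveredVerts (N \ M))
  obtain ⟨x, hx, y, hy, hxy⟩ :=
    (one_lt_card (s := c.coveredVerts (N \ M) \ c.coveredVerts (M \ N))).mp (by omega)
  obtain ⟨hxc, hxM⟩ := eq_and_unmatched_of_mem_sdiff c hM hN hx
  obtain ⟨hyc, hyM⟩ := eq_and_unmatched_of_mem_sdiff c hM hN hy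
  obtain ⟨P, hP⟩ := (ConnectedComponent.exact (hxc.trans hyc.symm)).exists_isPath
  have hx' := neighborSet_symmDiffGraph_subsingleton hN hxM
  have hy' := neighborSet_symmDiffGraph_subsingleton hN hyM
  have hdeg := ncard_neighborSet_symmDiffGraph_le_two hM hN
  have hlen : P.length = #(c.edgesIn (N \ M)) + #(c.edgesIn (M \ N)) := by
    rw [← P.length_edges, ← List.toFinset_card_of_nodup hP.isTrail.edges_nodup,
      ← card_union_of_disjoint (disjoint_sdiff_sdiff.mono (c.edgesIn_subset _)
        (c.edgesIn_subset _))]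
    congr 1
    ext e
    simp only [List.mem_toFinset, hP.mem_edges_iff hxy hx' hy' hdeg, mem_union,
      ConnectedComponent.mem_edgesIn, mem_edgeSet_symmDiffGraph hM hN, hxc]
    tauto
  rw [← hlen, ← hxc]
  exact hP.isPathComponent hxy hx' hy' hdeg

open Classical in
lemma two_mul_card_edgesIn_le [Finite V] (hM : IsMaximalMatching G M) (hN : IsMatching G N) :
    2 * #(c.edgesIn (N \ M)) ≤
      (if IsPathComponent (symmDiffGraph M N) c 3 then 1 else 0) + 3 * #(c.edgesIn (M \ N)) := by
  rcases (card_edgesIn_le_add_one c hM.1 hN).lt_or_eq with hlt | heq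
  · split_ifs <;> omega
  obtain h0 | h1 | h2 : #(c.edgesIn (M \ N)) = 0 ∨ #(c.edgesIn (M \ N)) = 1 ∨
      2 ≤ #(c.edgesIn (M \ N)) := by omega
  · rw [edgesIn_eq_empty_of_isMaximalMatching c hM hN (card_eq_zero.mp h0)] at heq
    simp at heq
  · have hP := isPathComponent_of_card_edgesIn_eq_add_one c hM.1 hN heq
    rw [heq, h1] at hP
    rw [if_pos hP]
    omega
  · split_ifs <;> omega

end Counting

lemma two_mul_card_sdiff_le {V : Type*} [Fintype V] [DecidableEq V] {G : SimpleGraph V}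
    {M N : Finset (Sym2 V)} (hM : IsMaximalMatching G M) (hN : IsMatching G N) :
    2 * #(N \ M) ≤ {c : (symmDiffGraph M N).ConnectedComponent |
      IsPathComponent (symmDiffGraph M N) c 3}.ncard + 3 * #(M \ N) := by
  classical
  have hfiber (F : Finset (Sym2 V)) :
      #F = ∑ c : (symmDiffGraph M N).ConnectedComponent, #(c.edgesIn F) := by
    simp only [ConnectedComponent.edgesIn]
    exact card_eq_sum_card_fiberwise fun _ _ => mem_univ _
  have hk : {c | IsPathComponent (symmDiffGraph M N) c 3}.ncard =
      ∑ c, if IsPathComponent (symmDiffGraph M N) c 3 then 1 else 0 := by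
    rw [← card_filter, ← Set.ncard_coe_finset, coe_filter]
    simp only [mem_univ, true_and]
  rw [hfiber (N \ M), hfiber (M \ N), hk, mul_sum, mul_sum, ← sum_add_distrib]
  exact sum_le_sum fun c _ => two_mul_card_edgesIn_le c hM hN

/-- For a maximal matching `M` and a maximum matching `M*`, with `k₃` the number of
connected components of `M ⊕ M*` that are paths with `3` edges, we have
`|M*| − |M| ≤ (1/2)·k₃ + (1/2)|M|`. -/
theorem sym_diff_path_count {V : Type*} [Fintype V] [DecidableEq V]
    (G : SimpleGraph V) (M Mstar : Finset (Sym2 V))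
    (hM : IsMaximalMatching G M) (hMstar : IsMaximumMatching G Mstar)
    (H : SimpleGraph V)
    (hH : H = SimpleGraph.fromEdgeSet
      (((M : Set (Sym2 V)) \ (Mstar : Set (Sym2 V))) ∪
        ((Mstar : Set (Sym2 V)) \ (M : Set (Sym2 V))))) :
    (Mstar.card : ℝ) - (M.card : ℝ) ≤
      (1 / 2) * ({c : H.ConnectedComponent | IsPathComponent H c 3}.ncard : ℝ) +
        (1 / 2) * (M.card : ℝ) := by
  obtain rfl : H = symmDiffGraph M Mstar := hH
  set k := {c | IsPathComponent (symmDiffGraph M Mstar) c 3}.ncard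
  have hsurplus : 2 * #(Mstar \ M) ≤ k + 3 * #(M \ Mstar) := two_mul_card_sdiff_le hM hMstar.1
  have hMstar_card := card_sdiff_add_card_inter Mstar M
  have hM_card := card_sdiff_add_card_inter M Mstar
  rw [inter_comm] at hM_card
  have hcount : (2 * #Mstar : ℝ) ≤ k + 3 * #M := by
    exact_mod_cast (show 2 * #Mstar ≤ k + 3 * #M by omega)
  linarith
end

section
/- Let M be a maximal matching and M* a maximum matching of a graph G with |M| ≤ (1/2 + ε)|M*| for some ε ≥ 0. Then the number of connected components of M ⊕ M* that are augmenting paths of length 3 for M is at least 2|M*| − 3|M| ≥ (1/2 − 3ε)|M*|. -/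
/-- The connected component `c` of `H` (the graph on the symmetric difference `M ⊕ M*`)
is an augmenting path of length 3 for `M`: a path `v₀v₁v₂v₃` whose first and last edges
are in `M* \ M` and whose middle edge is in `M \ M*`, and whose vertices are exactly the
vertices of the component. -/
def IsAugPath3Component {V : Type*} (H : SimpleGraph V) (M Mstar : Finset (Sym2 V))
    (c : H.ConnectedComponent) : Prop :=
  ∃ v0 v1 v2 v3 : V, List.Nodup [v0, v1, v2, v3] ∧
    s(v0, v1) ∈ Mstar ∧ s(v0, v1) ∉ M ∧
    s(v1, v2) ∈ M ∧ s(v1, v2) ∉ Mstar ∧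
    s(v2, v3) ∈ Mstar ∧ s(v2, v3) ∉ M ∧
    (∀ x : V, H.connectedComponentMk x = c ↔ x ∈ [v0, v1, v2, v3])

lemma sym2_cases {V : Type*} (f : Sym2 V) : ∃ x y : V, f = s(x, y) := by
  induction f using Sym2.ind with
  | _ x y => exact ⟨x, y, rfl⟩

lemma sym2_exists_mem {V : Type*} (f : Sym2 V) : ∃ x : V, x ∈ f := by
  obtain ⟨x, y, rfl⟩ := sym2_cases f
  exact ⟨x, Sym2.mem_mk_left x y⟩

noncomputable def sym2pt {V : Type*} (f : Sym2 V) : V := (sym2_exists_mem f).choose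

lemma sym2pt_mem {V : Type*} (f : Sym2 V) : sym2pt f ∈ f := (sym2_exists_mem f).choose_spec

lemma IsMatching.eq_of_mem {V : Type*} {G : SimpleGraph V} {M : Finset (Sym2 V)}
    (h : IsMatching G M) {e f : Sym2 V} (he : e ∈ M) (hf : f ∈ M) {v : V}
    (hv : v ∈ e) (hv' : v ∈ f) : e = f := by
  by_contra hne
  exact h.2 e he f hf hne v hv hv'

lemma walk_mem_closed {V : Type*} {H : SimpleGraph V} {S : Set V}
    (hS : ∀ ⦃x y : V⦄, x ∈ S → H.Adj x y → y ∈ S) :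
    ∀ {u v : V}, H.Walk u v → u ∈ S → v ∈ S := by
  intro u v w
  induction w with
  | nil => exact id
  | cons h _ ih => exact fun hu => ih (hS hu h)

lemma aug_core {V : Type*} [DecidableEq V]
    (G : SimpleGraph V) (M Mstar : Finset (Sym2 V))
    (hM : IsMatching G M) (hMs : IsMatching G Mstar)
    (H : SimpleGraph V)
    (hH : H = SimpleGraph.fromEdgeSet
      (((M : Set (Sym2 V)) \ (Mstar : Set (Sym2 V))) ∪
        ((Mstar : Set (Sym2 V)) \ (M : Set (Sym2 V)))))
    (v1 v2 : V) (f : Sym2 V) (hf : f = s(v1, v2))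
    (hfM : f ∈ M) (hfMs : f ∉ Mstar)
    (e1 e2 : Sym2 V) (hne : e1 ≠ e2)
    (he1s : e1 ∈ Mstar) (he1M : e1 ∉ M)
    (he2s : e2 ∈ Mstar) (he2M : e2 ∉ M)
    (hv1 : v1 ∈ e1) (hv2 : v2 ∈ e2)
    (hu1 : ∀ g ∈ M, g ∉ Mstar → (∃ v, v ∈ e1 ∧ v ∈ g) → g = f)
    (hu2 : ∀ g ∈ M, g ∉ Mstar → (∃ v, v ∈ e2 ∧ v ∈ g) → g = f) :
    IsAugPath3Component H M Mstar (H.connectedComponentMk (sym2pt f)) ∧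
      ∀ (x : V) (g : Sym2 V),
        H.connectedComponentMk x = H.connectedComponentMk (sym2pt f) →
          g ∈ M → x ∈ g → g = f := by
  subst hH
  set v0 : V := Sym2.Mem.other' hv1 with hv0def
  set v3 : V := Sym2.Mem.other' hv2 with hv3def
  have he1eq : s(v1, v0) = e1 := Sym2.other_spec' hv1
  have he2eq : s(v2, v3) = e2 := Sym2.other_spec' hv2
  have hv0e1 : v0 ∈ e1 := he1eq ▸ Sym2.mem_mk_right v1 v0
  have hv3e2 : v3 ∈ e2 := he2eq ▸ Sym2.mem_mk_right v2 v3
  have hv1f : v1 ∈ f := hf ▸ Sym2.mem_mk_left v1 v2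
  have hv2f : v2 ∈ f := hf ▸ Sym2.mem_mk_right v1 v2
  -- distinctness
  have hv12 : v1 ≠ v2 := by
    have := G.not_isDiag_of_mem_edgeSet (hM.1 (Finset.mem_coe.2 hfM))
    rw [hf, Sym2.mk_isDiag_iff] at this
    exact this
  have hv01 : v0 ≠ v1 := by
    have := G.not_isDiag_of_mem_edgeSet (hMs.1 (Finset.mem_coe.2 he1s))
    rw [← he1eq, Sym2.mk_isDiag_iff] at this
    exact fun h => this h.symm
  have hv23 : v2 ≠ v3 := by
    have := G.not_isDiag_of_mem_edgeSet (hMs.1 (Finset.mem_coe.2 he2s))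
    rw [← he2eq, Sym2.mk_isDiag_iff] at this
    exact this
  have hv02 : v0 ≠ v2 := by
    intro h
    apply he1M
    have : e1 = f := by rw [← he1eq, hf, h, Sym2.eq_swap]
    rw [this]; exact hfM
  have hv13 : v1 ≠ v3 := by
    intro h
    apply he2M
    have : e2 = f := by rw [← he2eq, hf, ← h, Sym2.eq_swap]
    rw [this]; exact hfM
  have hv03 : v0 ≠ v3 := by
    intro h
    exact hne (hMs.eq_of_mem he1s he2s hv0e1 (h ▸ hv3e2))
  -- unmatched endpoints
  have hm0 : ∀ g ∈ M, v0 ∉ g := by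
    intro g hg hv0g
    by_cases hgS : g ∈ Mstar
    · exact he1M ((hMs.eq_of_mem hgS he1s hv0g hv0e1) ▸ hg)
    · have := hu1 g hg hgS ⟨v0, hv0e1, hv0g⟩
      rw [this, hf, Sym2.mem_iff] at hv0g
      rcases hv0g with h | h
      · exact hv01 h
      · exact hv02 h
  have hm3 : ∀ g ∈ M, v3 ∉ g := by
    intro g hg hv3g
    by_cases hgS : g ∈ Mstar
    · exact he2M ((hMs.eq_of_mem hgS he2s hv3g hv3e2) ▸ hg)
    · have := hu2 g hg hgS ⟨v3, hv3e2, hv3g⟩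
      rw [this, hf, Sym2.mem_iff] at hv3g
      rcases hv3g with h | h
      · exact hv13 h.symm
      · exact hv23 h.symm
  -- adjacency in H
  have hAdj : ∀ x y : V,
      (SimpleGraph.fromEdgeSet
        (((M : Set (Sym2 V)) \ (Mstar : Set (Sym2 V))) ∪
          ((Mstar : Set (Sym2 V)) \ (M : Set (Sym2 V))))).Adj x y ↔
      ((s(x, y) ∈ M ∧ s(x, y) ∉ Mstar) ∨ (s(x, y) ∈ Mstar ∧ s(x, y) ∉ M)) ∧ x ≠ y := by
    intro x y
    rw [SimpleGraph.fromEdgeSet_adj]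
    simp [Set.mem_diff]
  set H := SimpleGraph.fromEdgeSet
      (((M : Set (Sym2 V)) \ (Mstar : Set (Sym2 V))) ∪
        ((Mstar : Set (Sym2 V)) \ (M : Set (Sym2 V)))) with hHdef
  -- the vertex set
  set Q : Set V := {x | x = v0 ∨ x = v1 ∨ x = v2 ∨ x = v3} with hQdef
  have hclosed : ∀ ⦃x y : V⦄, x ∈ Q → H.Adj x y → y ∈ Q := by
    intro x y hx hxy
    rw [hAdj] at hxy
    obtain ⟨hmem, hxyne⟩ := hxy
    rcases hx with h0 | h1 | h2 | h3
    · subst h0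
      rcases hmem with ⟨hmemM, -⟩ | ⟨hmemS, -⟩
      · exact absurd (Sym2.mem_mk_left v0 y) (hm0 _ hmemM)
      · have h' : s(v0, y) = s(v0, v1) :=
          (hMs.eq_of_mem hmemS he1s (Sym2.mem_mk_left v0 y) hv0e1).trans
            (by rw [← he1eq]; exact Sym2.eq_swap)
        exact Or.inr (Or.inl (Sym2.congr_right.1 h'))
    · rw [h1] at hmem
      rcases hmem with ⟨hmemM, -⟩ | ⟨hmemS, -⟩
      · have h' : s(v1, y) = s(v1, v2) :=
          (hM.eq_of_mem hmemM hfM (Sym2.mem_mk_left v1 y) hv1f).trans (by rw [hf])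
        exact Or.inr (Or.inr (Or.inl (Sym2.congr_right.1 h')))
      · have h' : s(v1, y) = s(v1, v0) :=
          (hMs.eq_of_mem hmemS he1s (Sym2.mem_mk_left v1 y) hv1).trans he1eq.symm
        exact Or.inl (Sym2.congr_right.1 h')
    · rw [h2] at hmem
      rcases hmem with ⟨hmemM, -⟩ | ⟨hmemS, -⟩
      · have h' : s(v2, y) = s(v2, v1) :=
          (hM.eq_of_mem hmemM hfM (Sym2.mem_mk_left v2 y) hv2f).trans
            (by rw [hf]; exact Sym2.eq_swap)
        exact Or.inr (Or.inl (Sym2.congr_right.1 h'))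
      · have h' : s(v2, y) = s(v2, v3) :=
          (hMs.eq_of_mem hmemS he2s (Sym2.mem_mk_left v2 y) hv2).trans he2eq.symm
        exact Or.inr (Or.inr (Or.inr (Sym2.congr_right.1 h')))
    · subst h3
      rcases hmem with ⟨hmemM, -⟩ | ⟨hmemS, -⟩
      · exact absurd (Sym2.mem_mk_left v3 y) (hm3 _ hmemM)
      · have h' : s(v3, y) = s(v3, v2) :=
          (hMs.eq_of_mem hmemS he2s (Sym2.mem_mk_left v3 y) hv3e2).trans
            (by rw [← he2eq]; exact Sym2.eq_swap)
        exact Or.inr (Or.inr (Or.inl (Sym2.congr_right.1 h')))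
  -- adjacencies along the path
  have a01 : H.Adj v0 v1 := by
    rw [hAdj]
    refine ⟨Or.inr ⟨?_, ?_⟩, fun h => hv01 h⟩
    · rw [Sym2.eq_swap, he1eq]; exact he1s
    · rw [Sym2.eq_swap, he1eq]; exact he1M
  have a12 : H.Adj v1 v2 := by
    rw [hAdj]
    exact ⟨Or.inl ⟨hf ▸ hfM, hf ▸ hfMs⟩, hv12⟩
  have a23 : H.Adj v2 v3 := by
    rw [hAdj]
    exact ⟨Or.inr ⟨he2eq ▸ he2s, he2eq ▸ he2M⟩, hv23⟩
  have c0 : H.connectedComponentMk v0 = H.connectedComponentMk v1 :=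
    SimpleGraph.ConnectedComponent.sound a01.reachable
  have c2 : H.connectedComponentMk v2 = H.connectedComponentMk v1 :=
    SimpleGraph.ConnectedComponent.sound a12.symm.reachable
  have c3 : H.connectedComponentMk v3 = H.connectedComponentMk v1 :=
    (SimpleGraph.ConnectedComponent.sound a23.symm.reachable).trans c2
  have hchar : ∀ x : V, H.connectedComponentMk x = H.connectedComponentMk v1 ↔ x ∈ Q := by
    intro x
    constructor
    · intro h
      have hr : H.Reachable v1 x := (SimpleGraph.ConnectedComponent.exact h).symm
      obtain ⟨w⟩ := hr
      exact walk_mem_closed hclosed w (Or.inr (Or.inl rfl))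
    · intro hx
      rcases hx with h | h | h | h <;> subst h
      · exact c0
      · rfl
      · exact c2
      · exact c3
  -- component of sym2pt f
  have hcf : H.connectedComponentMk (sym2pt f) = H.connectedComponentMk v1 := by
    obtain ⟨w, hwdef⟩ : ∃ w, sym2pt f = w := ⟨_, rfl⟩
    rw [hwdef]
    have hw : w ∈ f := hwdef ▸ sym2pt_mem f
    rw [hf, Sym2.mem_iff] at hw
    rcases hw with rfl | rfl
    · rfl
    · exact c2
  constructor
  · refine ⟨v0, v1, v2, v3, ?_, ?_, ?_, ?_, ?_, ?_, ?_, ?_⟩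
    · simp [hv01, hv02, hv03, hv12, hv13, hv23]
    · rw [Sym2.eq_swap, he1eq]; exact he1s
    · rw [Sym2.eq_swap, he1eq]; exact he1M
    · exact hf ▸ hfM
    · exact hf ▸ hfMs
    · exact he2eq ▸ he2s
    · exact he2eq ▸ he2M
    · intro x
      rw [hcf, hchar x]
      simp [hQdef]
  · intro x g hx hg hxg
    rw [hcf] at hx
    rcases (hchar x).1 hx with h | h | h | h <;> subst h
    · exact absurd hxg (hm0 g hg)
    · exact (hM.eq_of_mem hg hfM hxg hv1f)
    · exact (hM.eq_of_mem hg hfM hxg hv2f)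
    · exact absurd hxg (hm3 g hg)

lemma two_bound {V : Type*} [DecidableEq V] {G : SimpleGraph V} {N : Finset (Sym2 V)}
    (hN : IsMatching G N) {T : Finset (Sym2 V)} (hT : T ⊆ N) (x y : V)
    (p : Sym2 V → Prop) [DecidablePred p] (hp : ∀ g, p g → x ∈ g ∨ y ∈ g) :
    (T.filter p).card ≤ 2 := by
  have hsub : T.filter p ⊆ T.filter (fun g => x ∈ g) ∪ T.filter (fun g => y ∈ g) := by
    intro g hg
    rw [Finset.mem_filter] at hg
    rcases hp g hg.2 with h | h
    · exact Finset.mem_union_left _ (Finset.mem_filter.2 ⟨hg.1, h⟩)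
    · exact Finset.mem_union_right _ (Finset.mem_filter.2 ⟨hg.1, h⟩)
  have h1 : ∀ (z : V), (T.filter (fun g => z ∈ g)).card ≤ 1 := by
    intro z
    apply Finset.card_le_one.2
    intro a ha b hb
    rw [Finset.mem_filter] at ha hb
    exact hN.eq_of_mem (hT ha.1) (hT hb.1) ha.2 hb.2
  calc (T.filter p).card ≤ _ := Finset.card_le_card hsub
    _ ≤ _ := Finset.card_union_le _ _
    _ ≤ 2 := by have := h1 x; have := h1 y; omega

/-- If `M` is maximal, `M*` maximum and `|M| ≤ (1/2 + ε)|M*|`, then the number of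
components of `M ⊕ M*` that are augmenting paths of length 3 for `M` is at least
`2|M*| − 3|M| ≥ (1/2 − 3ε)|M*|`. -/
theorem aug_path3_component_count {V : Type*} [Fintype V] [DecidableEq V]
    (G : SimpleGraph V) (M Mstar : Finset (Sym2 V)) (ε : ℝ) (hε : 0 ≤ ε)
    (hM : IsMaximalMatching G M) (hMstar : IsMaximumMatching G Mstar)
    (hcard : (M.card : ℝ) ≤ (1 / 2 + ε) * (Mstar.card : ℝ))
    (H : SimpleGraph V)
    (hH : H = SimpleGraph.fromEdgeSet
      (((M : Set (Sym2 V)) \ (Mstar : Set (Sym2 V))) ∪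
        ((Mstar : Set (Sym2 V)) \ (M : Set (Sym2 V))))) :
    2 * (Mstar.card : ℝ) - 3 * (M.card : ℝ) ≤
      ({c : H.ConnectedComponent | IsAugPath3Component H M Mstar c}.ncard : ℝ) ∧
    (1 / 2 - 3 * ε) * (Mstar.card : ℝ) ≤ 2 * (Mstar.card : ℝ) - 3 * (M.card : ℝ) := by
  classical
  obtain ⟨hMmat, hMmax⟩ := hM
  obtain ⟨hSmat, -⟩ := hMstar
  refine ⟨?_, by linarith⟩
  set A := Mstar \ M with hA
  set B := M \ Mstar with hB
  have hAsubS : A ⊆ Mstar := Finset.sdiff_subset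
  have hBsubM : B ⊆ M := Finset.sdiff_subset
  set d : Sym2 V → ℕ := fun e => (B.filter fun g => ∃ v, v ∈ e ∧ v ∈ g).card with hd
  set P := A.filter (fun e => d e = 1) with hPdef
  have hPsubA : P ⊆ A := Finset.filter_subset _ _
  set m : Sym2 V → ℕ := fun g => (P.filter fun e => ∃ v, v ∈ e ∧ v ∈ g).card with hm
  set Gd := B.filter (fun g => m g = 2) with hGd
  -- swap lemma
  have hswap : ∀ (S T : Finset (Sym2 V)),
      (∑ e ∈ S, (T.filter fun g => ∃ v, v ∈ e ∧ v ∈ g).card)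
        = ∑ g ∈ T, (S.filter fun e => ∃ v, v ∈ e ∧ v ∈ g).card := by
    intro S T
    simp only [Finset.card_filter]
    exact Finset.sum_comm
  -- degree bounds
  have hd_le : ∀ e ∈ Mstar, d e ≤ 2 := by
    intro e he
    obtain ⟨x, y, rfl⟩ := sym2_cases e
    refine two_bound hMmat hBsubM x y _ ?_
    rintro g ⟨v, hve, hvg⟩
    rw [Sym2.mem_iff] at hve
    rcases hve with rfl | rfl
    · exact Or.inl hvg
    · exact Or.inr hvg
  have hL_le : ∀ (T : Finset (Sym2 V)), T ⊆ Mstar → ∀ g ∈ M,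
      (T.filter fun e => ∃ v, v ∈ e ∧ v ∈ g).card ≤ 2 := by
    intro T hT g hg
    obtain ⟨x, y, hrep⟩ := sym2_cases g
    refine two_bound hSmat hT x y _ ?_
    rintro e ⟨v, hve, hvg⟩
    rw [hrep, Sym2.mem_iff] at hvg
    rcases hvg with rfl | rfl
    · exact Or.inl hve
    · exact Or.inr hve
  -- maximality: every edge of A touches B
  have hd_ge : ∀ e ∈ A, 1 ≤ d e := by
    intro e heA
    obtain ⟨heS, heM⟩ := Finset.mem_sdiff.1 heA
    have hshare : ∃ g ∈ B, ∃ v, v ∈ e ∧ v ∈ g := by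
      by_contra hno
      push_neg at hno
      have hnoM : ∀ g ∈ M, ∀ v, v ∈ e → v ∉ g := by
        intro g hg v hve hvg
        by_cases hgS : g ∈ Mstar
        · exact heM ((hSmat.eq_of_mem hgS heS hvg hve) ▸ hg)
        · exact hno g (Finset.mem_sdiff.2 ⟨hg, hgS⟩) v hve hvg
      apply hMmax e (hSmat.1 (Finset.mem_coe.2 heS)) heM
      constructor
      · intro g hg
        rw [Finset.coe_insert, Set.mem_insert_iff] at hg
        rcases hg with rfl | hg
        · exact hSmat.1 (Finset.mem_coe.2 heS)
        · exact hMmat.1 hg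
      · intro a ha b hb hab v hva hvb
        rw [Finset.mem_insert] at ha hb
        rcases ha with rfl | ha
        · rcases hb with rfl | hb
          · exact hab rfl
          · exact hnoM b hb v hva hvb
        · rcases hb with rfl | hb
          · exact hnoM a ha v hvb hva
          · exact hMmat.2 a ha b hb hab v hva hvb
    obtain ⟨g, hgB, hsh⟩ := hshare
    have hmemfil : g ∈ B.filter fun g => ∃ v, v ∈ e ∧ v ∈ g := Finset.mem_filter.2 ⟨hgB, hsh⟩
    have hne' : (B.filter fun g => ∃ v, v ∈ e ∧ v ∈ g).Nonempty := ⟨g, hmemfil⟩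
    have hpos : 0 < (B.filter fun g => ∃ v, v ∈ e ∧ v ∈ g).card := Finset.card_pos.2 hne'
    simp only [hd]
    exact hpos
  -- sum over A of d is at most 2|B|
  have sum1 : ∑ e ∈ A, d e ≤ 2 * B.card := by
    rw [hd]
    rw [hswap A B]
    calc ∑ g ∈ B, (A.filter fun e => ∃ v, v ∈ e ∧ v ∈ g).card
        ≤ ∑ _g ∈ B, 2 := Finset.sum_le_sum (fun g hg => hL_le A hAsubS g (hBsubM hg))
      _ = 2 * B.card := by rw [Finset.sum_const, smul_eq_mul, mul_comm]
  -- 2|A| ≤ |P| + 2|B|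
  have h5 : 2 * A.card ≤ P.card + 2 * B.card := by
    have hsplit := Finset.sum_filter_add_sum_filter_not A (fun e => d e = 1) d
    have hPsum : ∑ e ∈ A.filter (fun e => d e = 1), d e
        = (A.filter (fun e => d e = 1)).card := by
      calc ∑ e ∈ A.filter (fun e => d e = 1), d e
          = ∑ _e ∈ A.filter (fun e => d e = 1), 1 :=
            Finset.sum_congr rfl (fun e he => (Finset.mem_filter.1 he).2)
        _ = _ := by simp
    have hQsum : 2 * (A.filter fun e => ¬ d e = 1).card ≤
        ∑ e ∈ A.filter (fun e => ¬ d e = 1), d e := by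
      rw [mul_comm, ← smul_eq_mul]
      apply Finset.card_nsmul_le_sum
      intro x hx
      obtain ⟨hxA, hx1⟩ := Finset.mem_filter.1 hx
      have := hd_ge x hxA
      omega
    have hcardsplit := Finset.card_filter_add_card_filter_not
      (s := A) (p := fun e => d e = 1)
    have hPP : P = A.filter (fun e => d e = 1) := hPdef
    rw [hPP]
    omega
  -- P.card equals sum of m over B
  have h6 : ∑ g ∈ B, m g = P.card := by
    rw [hm, ← hswap P B]
    calc ∑ e ∈ P, (B.filter fun g => ∃ v, v ∈ e ∧ v ∈ g).card
        = ∑ e ∈ P, d e := by rw [hd]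
      _ = ∑ e ∈ P, 1 := Finset.sum_congr rfl (fun e he => (Finset.mem_filter.1 he).2)
      _ = P.card := by simp
  -- |P| ≤ |Gd| + |B|
  have h7 : P.card ≤ Gd.card + B.card := by
    have hsplit := Finset.sum_filter_add_sum_filter_not B (fun g => m g = 2) m
    have hGsum : ∑ g ∈ B.filter (fun g => m g = 2), m g
        = 2 * (B.filter (fun g => m g = 2)).card := by
      calc ∑ g ∈ B.filter (fun g => m g = 2), m g
          = ∑ _g ∈ B.filter (fun g => m g = 2), 2 :=
            Finset.sum_congr rfl (fun g hg => (Finset.mem_filter.1 hg).2)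
        _ = _ := by rw [Finset.sum_const, smul_eq_mul, mul_comm]
    have hRsum : ∑ g ∈ B.filter (fun g => ¬ m g = 2), m g
        ≤ (B.filter (fun g => ¬ m g = 2)).card := by
      calc ∑ g ∈ B.filter (fun g => ¬ m g = 2), m g
          ≤ ∑ _g ∈ B.filter (fun g => ¬ m g = 2), 1 := by
            apply Finset.sum_le_sum
            intro g hg
            obtain ⟨hgB, hg2⟩ := Finset.mem_filter.1 hg
            have h2 := hL_le P (hPsubA.trans hAsubS) g (hBsubM hgB)
            simp only [hm] at hg2 ⊢
            omega
        _ = _ := by simp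
    have hcardsplit := Finset.card_filter_add_card_filter_not
      (s := B) (p := fun g => m g = 2)
    have hGG : Gd = B.filter (fun g => m g = 2) := hGd
    rw [hGG]
    omega
  -- the key construction
  have key : ∀ f ∈ Gd, IsAugPath3Component H M Mstar (H.connectedComponentMk (sym2pt f)) ∧
      ∀ (x : V) (g : Sym2 V),
        H.connectedComponentMk x = H.connectedComponentMk (sym2pt f) →
          g ∈ M → x ∈ g → g = f := by
    intro f hf
    obtain ⟨hfB, hfm2⟩ := Finset.mem_filter.1 hf
    obtain ⟨hfM, hfMs⟩ := Finset.mem_sdiff.1 hfB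
    rw [hm] at hfm2
    obtain ⟨e1, e2, hne, hpair⟩ := Finset.card_eq_two.1 hfm2
    have he1mem : e1 ∈ P.filter (fun e => ∃ v, v ∈ e ∧ v ∈ f) := by
      rw [hpair]; exact Finset.mem_insert_self _ _
    have he2mem : e2 ∈ P.filter (fun e => ∃ v, v ∈ e ∧ v ∈ f) := by
      rw [hpair]; exact Finset.mem_insert_of_mem (Finset.mem_singleton_self _)
    obtain ⟨he1P, hsh1⟩ := Finset.mem_filter.1 he1mem
    obtain ⟨he2P, hsh2⟩ := Finset.mem_filter.1 he2mem
    obtain ⟨he1A, hde1⟩ := Finset.mem_filter.1 he1P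
    obtain ⟨he2A, hde2⟩ := Finset.mem_filter.1 he2P
    obtain ⟨he1s, he1M⟩ := Finset.mem_sdiff.1 he1A
    obtain ⟨he2s, he2M⟩ := Finset.mem_sdiff.1 he2A
    have hu : ∀ (e : Sym2 V), d e = 1 → (∃ v, v ∈ e ∧ v ∈ f) →
        ∀ g ∈ M, g ∉ Mstar → (∃ v, v ∈ e ∧ v ∈ g) → g = f := by
      intro e hde hshe g hg hgS hshg
      have hgB : g ∈ B := Finset.mem_sdiff.2 ⟨hg, hgS⟩
      have h1 : g ∈ B.filter (fun g => ∃ v, v ∈ e ∧ v ∈ g) := Finset.mem_filter.2 ⟨hgB, hshg⟩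
      have h2 : f ∈ B.filter (fun g => ∃ v, v ∈ e ∧ v ∈ g) := Finset.mem_filter.2 ⟨hfB, hshe⟩
      have hle : (B.filter (fun g => ∃ v, v ∈ e ∧ v ∈ g)).card ≤ 1 := by
        simp only [hd] at hde; omega
      exact Finset.card_le_one.1 hle g h1 f h2
    have hu1 := hu e1 hde1 hsh1
    have hu2 := hu e2 hde2 hsh2
    obtain ⟨x, y, hrep⟩ := sym2_cases f
    have hmem1 : x ∈ e1 ∨ y ∈ e1 := by
      obtain ⟨v, hve, hvf⟩ := hsh1
      rw [hrep, Sym2.mem_iff] at hvf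
      rcases hvf with rfl | rfl
      · exact Or.inl hve
      · exact Or.inr hve
    have hmem2 : x ∈ e2 ∨ y ∈ e2 := by
      obtain ⟨v, hve, hvf⟩ := hsh2
      rw [hrep, Sym2.mem_iff] at hvf
      rcases hvf with rfl | rfl
      · exact Or.inl hve
      · exact Or.inr hve
    rcases hmem1 with hx1 | hy1 <;> rcases hmem2 with hx2 | hy2
    · exact absurd (hSmat.eq_of_mem he1s he2s hx1 hx2) hne
    · exact aug_core G M Mstar hMmat hSmat H hH x y f hrep hfM hfMs
        e1 e2 hne he1s he1M he2s he2M hx1 hy2 hu1 hu2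
    · exact aug_core G M Mstar hMmat hSmat H hH y x f (hrep.trans Sym2.eq_swap) hfM hfMs
        e1 e2 hne he1s he1M he2s he2M hy1 hx2 hu1 hu2
    · exact absurd (hSmat.eq_of_mem he1s he2s hy1 hy2) hne
  -- injection into the set of components
  haveI : Finite H.ConnectedComponent :=
    Finite.of_surjective H.connectedComponentMk (fun c => Quot.exists_rep c)
  have hinj : Gd.card ≤ ({c : H.ConnectedComponent | IsAugPath3Component H M Mstar c}).ncard := by
    rw [← Set.ncard_coe_finset]
    apply Set.ncard_le_ncard_of_injOn (fun f => H.connectedComponentMk (sym2pt f))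
    · intro f hf
      exact (key f (Finset.mem_coe.1 hf)).1
    · intro f hf f' hf' heq
      exact (key f' (Finset.mem_coe.1 hf')).2 (sym2pt f) f heq
        (hBsubM (Finset.mem_sdiff.2 (Finset.mem_sdiff.1
          ((Finset.filter_subset _ _) (Finset.mem_coe.1 hf))))) (sym2pt_mem f)
  -- put everything together
  have hc1 : A.card + (Mstar ∩ M).card = Mstar.card := Finset.card_sdiff_add_card_inter _ _
  have hc2 : B.card + (M ∩ Mstar).card = M.card := Finset.card_sdiff_add_card_inter _ _
  have hc3 : (Mstar ∩ M).card = (M ∩ Mstar).card := by rw [Finset.inter_comm]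
  have hfinal : 2 * Mstar.card ≤
      ({c : H.ConnectedComponent | IsAugPath3Component H M Mstar c}).ncard + 3 * M.card := by
    omega
  have hcast : (2 * Mstar.card : ℝ) ≤
      (({c : H.ConnectedComponent | IsAugPath3Component H M Mstar c}).ncard : ℝ)
        + 3 * M.card := by exact_mod_cast hfinal
  linarith
end

section
/- Let G = (A, B, E) be a bipartite graph, λ ≥ 2 an integer, and let S ⊆ E be produced by the following greedy procedure on any ordering of the edges: starting from S = ∅, upon seeing edge ab (a ∈ A, b ∈ B), add ab to S if deg_S(a) = 0 and deg_S(b) ≤ λ − 1. Then S satisfies deg_S(a) ≤ 1 for all a ∈ A and deg_S(b) ≤ λ for all b ∈ B, and the number of A-vertices covered by S satisfies |A(S)| ≥ (λ/(λ+1))·|M*|, where M* is a maximum matching of G. -/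
/-- A matching in a bipartite graph with edge set `E ⊆ α × β`: a set of edges of `E`,
no two of which share an endpoint. -/
def IsBipMatching {α β : Type*} (E M : Finset (α × β)) : Prop :=
  M ⊆ E ∧ ∀ e ∈ M, ∀ f ∈ M, e ≠ f → e.1 ≠ f.1 ∧ e.2 ≠ f.2

/-- A maximum matching of the bipartite graph with edge set `E`. -/
def IsBipMaximumMatching {α β : Type*} (E M : Finset (α × β)) : Prop :=
  IsBipMatching E M ∧ ∀ N : Finset (α × β), IsBipMatching E N → N.card ≤ M.card

/-- One step of the greedy incomplete `λ`-bounded semi-matching procedure: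
add edge `e = ab` if `deg_S(a) = 0` and `deg_S(b) ≤ λ - 1`. -/
def semiStep {α β : Type*} [DecidableEq α] [DecidableEq β] (lam : ℕ)
    (S : Finset (α × β)) (e : α × β) : Finset (α × β) :=
  if (S.filter fun f => f.1 = e.1).card = 0 ∧
      (S.filter fun f => f.2 = e.2).card ≤ lam - 1 then
    insert e S
  else S

/-- The greedy incomplete `λ`-bounded semi-matching computed on the edge stream `π`. -/
def semiGreedy {α β : Type*} [DecidableEq α] [DecidableEq β] (lam : ℕ)
    (π : List (α × β)) : Finset (α × β) :=
  π.foldl (semiStep lam) ∅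

/-!
Every edge `ab` of the stream is rejected or kept, and in both cases, at the end of the run,
either `a` is covered by `S` or `b` is saturated (`deg_S(b) ≥ λ`): the edge is blocked.
Split a maximum matching `M*` into the edges with covered `A`-endpoint, at most `|A(S)|` of
them, and the rest, whose `B`-endpoints are distinct saturated vertices, so that `λ` times
their number is at most `|S| = |A(S)|`. Hence `λ |M*| ≤ λ |A(S)| + |A(S)|`.
-/

section SemiGreedy

open Finset

variable {α β : Type*}

def IsBlocked [DecidableEq α] [DecidableEq β] (lam : ℕ) (S : Finset (α × β)) (e : α × β) :
    Prop :=
  e.1 ∈ S.image Prod.fst ∨ lam ≤ #{f ∈ S | f.2 = e.2}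

section Matching

variable {E M : Finset (α × β)}

theorem IsBipMatching.injOn_fst (hM : IsBipMatching E M) :
    Set.InjOn Prod.fst (M : Set (α × β)) :=
  fun e he f hf hef => by_contra fun hne => (hM.2 e he f hf hne).1 hef

theorem IsBipMatching.injOn_snd (hM : IsBipMatching E M) :
    Set.InjOn Prod.snd (M : Set (α × β)) :=
  fun e he f hf hef => by_contra fun hne => (hM.2 e he f hf hne).2 hef

theorem IsBipMatching.card_filter_fst_mem_le [DecidableEq α] (hM : IsBipMatching E M)
    (X : Finset α) :
    #{e ∈ M | e.1 ∈ X} ≤ #X := by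
  rw [← card_image_of_injOn (hM.injOn_fst.mono (filter_subset _ M))]
  exact card_le_card fun a ha => by
    obtain ⟨e, he, rfl⟩ := mem_image.mp ha
    exact (mem_filter.mp he).2

end Matching

theorem card_image_fst_eq_card [DecidableEq α] (S : Finset (α × β))
    (hS : ∀ a : α, #{f ∈ S | f.1 = a} ≤ 1) : #(S.image Prod.fst) = #S :=
  card_image_of_injOn fun f hf g hg hfg =>
    card_le_one.mp (hS f.1) f (mem_filter.mpr ⟨hf, rfl⟩) g (mem_filter.mpr ⟨hg, hfg.symm⟩)

theorem mul_card_le_card_of_le_card_filter_snd [DecidableEq β] (S : Finset (α × β))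
    (T : Finset β) (lam : ℕ) (hT : ∀ b ∈ T, lam ≤ #{f ∈ S | f.2 = b}) :
    #T * lam ≤ #S :=
  calc #T * lam = #T • lam := (smul_eq_mul _ _).symm
    _ ≤ ∑ b ∈ T, #{f ∈ S | f.2 = b} := card_nsmul_le_sum _ _ _ hT
    _ = #{f ∈ S | f.2 ∈ T} := sum_card_fiberwise_eq_card_filter _ _ _
    _ ≤ #S := card_filter_le _ _

theorem mul_card_le_of_isBlocked [DecidableEq α] [DecidableEq β] {E M S : Finset (α × β)}
    (lam : ℕ) (hM : IsBipMatching E M) (hS : ∀ a : α, #{f ∈ S | f.1 = a} ≤ 1)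
    (hblock : ∀ e ∈ M, IsBlocked lam S e) :
    lam * #M ≤ (lam + 1) * #(S.image Prod.fst) := by
  set A := S.image Prod.fst
  set U := {e ∈ M | e.1 ∉ A}
  have hM_split : #M ≤ #A + #U := by
    rw [← card_filter_add_card_filter_not (fun e : α × β => e.1 ∈ A)]
    exact Nat.add_le_add_right (hM.card_filter_fst_mem_le A) _
  have hU_saturated : #U * lam ≤ #A := by
    rw [← card_image_of_injOn (hM.injOn_snd.mono (filter_subset _ M)),
      card_image_fst_eq_card S hS]
    refine mul_card_le_card_of_le_card_filter_snd S _ lam fun b hb => ?_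
    obtain ⟨e, he, rfl⟩ := mem_image.mp hb
    obtain ⟨heM, heA⟩ := mem_filter.mp he
    exact (hblock e heM).resolve_left heA
  calc lam * #M ≤ lam * (#A + #U) := Nat.mul_le_mul_left _ hM_split
    _ = lam * #A + #U * lam := by ring
    _ ≤ lam * #A + #A := Nat.add_le_add_left hU_saturated _
    _ = (lam + 1) * #A := by ring

section Greedy

variable [DecidableEq α] [DecidableEq β]

theorem IsBlocked.mono {lam : ℕ} {S T : Finset (α × β)} {e : α × β} (hST : S ⊆ T)
    (h : IsBlocked lam S e) : IsBlocked lam T e :=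
  h.imp (fun ha => image_subset_image hST ha)
    (fun hb => hb.trans (card_le_card (filter_subset_filter _ hST)))

theorem subset_semiStep (lam : ℕ) (S : Finset (α × β)) (e : α × β) :
    S ⊆ semiStep lam S e := by
  unfold semiStep
  split
  · exact subset_insert _ _
  · exact subset_rfl

theorem subset_foldl_semiStep (lam : ℕ) (l : List (α × β)) (S : Finset (α × β)) :
    S ⊆ l.foldl (semiStep lam) S :=
  List.foldlRecOn (motive := fun T => S ⊆ T) l _ subset_rfl
    fun T hT e _ => hT.trans (subset_semiStep lam T e)

theorem isBlocked_semiStep (lam : ℕ) (S : Finset (α × β)) (e : α × β) :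
    IsBlocked lam (semiStep lam S e) e := by
  by_cases h : #{f ∈ S | f.1 = e.1} = 0 ∧ #{f ∈ S | f.2 = e.2} ≤ lam - 1
  · rw [semiStep, if_pos h]
    exact Or.inl (mem_image_of_mem _ (mem_insert_self e S))
  · refine IsBlocked.mono (subset_semiStep lam S e) ?_
    rcases not_and_or.mp h with h | h
    · obtain ⟨f, hf⟩ := card_ne_zero.mp h
      exact Or.inl (mem_image.mpr ⟨f, (mem_filter.mp hf).1, (mem_filter.mp hf).2⟩)
    · exact Or.inr (by omega)

theorem isBlocked_foldl_semiStep (lam : ℕ) {l : List (α × β)} {e : α × β} (he : e ∈ l)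
    (S : Finset (α × β)) : IsBlocked lam (l.foldl (semiStep lam) S) e := by
  induction l generalizing S with
  | nil => cases he
  | cons g l ih =>
    rw [List.foldl_cons]
    rcases List.mem_cons.mp he with rfl | he
    · exact (isBlocked_semiStep lam S e).mono (subset_foldl_semiStep lam l _)
    · exact ih he _

theorem card_filter_fst_semiStep_le_one (lam : ℕ) {S : Finset (α × β)}
    (hS : ∀ a : α, #{f ∈ S | f.1 = a} ≤ 1) (e : α × β) (a : α) :
    #{f ∈ semiStep lam S e | f.1 = a} ≤ 1 := by
  unfold semiStep
  split_ifs with h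
  · rw [filter_insert]
    split_ifs with ha
    · subst ha
      exact (card_insert_le _ _).trans (by omega)
    · exact hS a
  · exact hS a

theorem card_filter_snd_semiStep_le {lam : ℕ} (hlam : 1 ≤ lam) {S : Finset (α × β)}
    (hS : ∀ b : β, #{f ∈ S | f.2 = b} ≤ lam) (e : α × β) (b : β) :
    #{f ∈ semiStep lam S e | f.2 = b} ≤ lam := by
  unfold semiStep
  split_ifs with h
  · rw [filter_insert]
    split_ifs with hb
    · subst hb
      exact (card_insert_le _ _).trans (by omega)
    · exact hS b
  · exact hS b

theorem card_filter_fst_semiGreedy_le_one (lam : ℕ) (π : List (α × β)) (a : α) :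
    #{f ∈ semiGreedy lam π | f.1 = a} ≤ 1 :=
  List.foldlRecOn (motive := fun S : Finset (α × β) => ∀ a : α, #{f ∈ S | f.1 = a} ≤ 1)
    π _ (by simp)
    (fun _ hS e _ => card_filter_fst_semiStep_le_one lam hS e) a

theorem card_filter_snd_semiGreedy_le {lam : ℕ} (hlam : 1 ≤ lam) (π : List (α × β))
    (b : β) :
    #{f ∈ semiGreedy lam π | f.2 = b} ≤ lam :=
  List.foldlRecOn (motive := fun S : Finset (α × β) => ∀ b : β, #{f ∈ S | f.2 = b} ≤ lam)
    π _ (by simp)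
    (fun _ hS e _ => card_filter_snd_semiStep_le hlam hS e) b

end Greedy

end SemiGreedy

theorem semiGreedy_covers_general {α β : Type*} [DecidableEq α] [DecidableEq β]
    (π : List (α × β)) (lam : ℕ) (hlam : 2 ≤ lam)
    (Mstar : Finset (α × β)) (hMstar : IsBipMaximumMatching π.toFinset Mstar) :
    (∀ a : α, ((semiGreedy lam π).filter fun f => f.1 = a).card ≤ 1) ∧
    (∀ b : β, ((semiGreedy lam π).filter fun f => f.2 = b).card ≤ lam) ∧
    ((lam : ℝ) / ((lam : ℝ) + 1)) * (Mstar.card : ℝ) ≤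
      (((semiGreedy lam π).image Prod.fst).card : ℝ) := by
  have hdegA := card_filter_fst_semiGreedy_le_one lam π
  have hblock : ∀ e ∈ Mstar, IsBlocked lam (semiGreedy lam π) e := fun e he =>
    isBlocked_foldl_semiStep lam (List.mem_toFinset.mp (hMstar.1.1 he)) ∅
  have hcount :
      (lam * Mstar.card : ℝ) ≤ (lam + 1) * ((semiGreedy lam π).image Prod.fst).card := by
    exact_mod_cast mul_card_le_of_isBlocked lam hMstar.1 hdegA hblock
  refine ⟨hdegA, card_filter_snd_semiGreedy_le (by omega) π, ?_⟩
  rw [div_mul_eq_mul_div, div_le_iff₀ (by positivity)]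
  linarith

/-- The greedy procedure (on any ordering `π` of the edges of a bipartite graph)
produces a set `S` with `deg_S(a) ≤ 1` for `a ∈ A`, `deg_S(b) ≤ λ` for `b ∈ B`, and
`|A(S)| ≥ (λ/(λ+1))·|M*|` for a maximum matching `M*`. -/
theorem semiGreedy_covers {α β : Type*} [DecidableEq α] [DecidableEq β]
    (π : List (α × β)) (hnodup : π.Nodup) (lam : ℕ) (hlam : 2 ≤ lam)
    (Mstar : Finset (α × β)) (hMstar : IsBipMaximumMatching π.toFinset Mstar) :
    (∀ a : α, ((semiGreedy lam π).filter fun f => f.1 = a).card ≤ 1) ∧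
    (∀ b : β, ((semiGreedy lam π).filter fun f => f.2 = b).card ≤ lam) ∧
    ((lam : ℝ) / ((lam : ℝ) + 1)) * (Mstar.card : ℝ) ≤
      (((semiGreedy lam π).image Prod.fst).card : ℝ) :=
  semiGreedy_covers_general π lam hlam Mstar hMstar
end

section
/- Let G = (A, B, E) be a bipartite graph with maximum matching M*, let λ ≥ 2, and let S ⊆ E satisfy deg_S(a) ≤ 1 for all a ∈ A, deg_S(b) ≤ λ for all b ∈ B, and the maximality property that for every edge ab ∈ E with deg_S(a) = 0 one has deg_S(b) = λ. Then the set of A-vertices covered by M* but not by S has size at most (1/λ)·|A(S)|, and consequently |A(S)| ≥ (λ/(λ+1))|M*|. -/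
/-- Let `S ⊆ E` be an incomplete `λ`-bounded semi-matching (`deg_S(a) ≤ 1`,
`deg_S(b) ≤ λ`) with the maximality property that every edge `ab ∈ E` with
`deg_S(a) = 0` has `deg_S(b) = λ`. Then the `A`-vertices covered by a maximum matching
`M*` but not by `S` number at most `(1/λ)|A(S)|`, and `|A(S)| ≥ (λ/(λ+1))|M*|`. -/
theorem semi_matching_cover_bound {α β : Type*} [DecidableEq α] [DecidableEq β]
    (E : Finset (α × β)) (lam : ℕ) (hlam : 2 ≤ lam)
    (S : Finset (α × β)) (hSE : S ⊆ E)
    (hdegA : ∀ a : α, (S.filter fun f => f.1 = a).card ≤ 1)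
    (hdegB : ∀ b : β, (S.filter fun f => f.2 = b).card ≤ lam)
    (hmax : ∀ e ∈ E, (S.filter fun f => f.1 = e.1).card = 0 →
      (S.filter fun f => f.2 = e.2).card = lam)
    (Mstar : Finset (α × β)) (hMstar : IsBipMaximumMatching E Mstar) :
    ((Mstar.image Prod.fst \ S.image Prod.fst).card : ℝ) ≤
      (1 / (lam : ℝ)) * ((S.image Prod.fst).card : ℝ) ∧
    ((lam : ℝ) / ((lam : ℝ) + 1)) * (Mstar.card : ℝ) ≤
      ((S.image Prod.fst).card : ℝ) := by
  obtain ⟨⟨hME, hMdisj⟩, _⟩ := hMstar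
  -- injectivity of fst on S
  have hSinj : Set.InjOn Prod.fst (S : Set (α × β)) := by
    intro f hf g hg h
    by_contra hne
    have h2 : 1 < (S.filter fun x => x.1 = f.1).card := by
      apply Finset.one_lt_card.2
      exact ⟨f, Finset.mem_filter.2 ⟨hf, rfl⟩, g, Finset.mem_filter.2 ⟨hg, h.symm⟩, hne⟩
    exact absurd (hdegA f.1) (by omega)
  have hScard : (S.image Prod.fst).card = S.card := Finset.card_image_of_injOn hSinj
  have hMfst : Set.InjOn Prod.fst (Mstar : Set (α × β)) := by
    intro f hf g hg h
    by_contra hne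
    exact (hMdisj f hf g hg hne).1 h
  have hMsnd : Set.InjOn Prod.snd (Mstar : Set (α × β)) := by
    intro f hf g hg h
    by_contra hne
    exact (hMdisj f hf g hg hne).2 h
  set F := Mstar.filter (fun e => e.1 ∉ S.image Prod.fst) with hF
  have hFim : Mstar.image Prod.fst \ S.image Prod.fst = F.image Prod.fst := by
    ext a
    simp only [Finset.mem_sdiff, Finset.mem_image, Finset.mem_filter, hF]
    constructor
    · rintro ⟨⟨e, he, rfl⟩, h2⟩; exact ⟨e, ⟨he, h2⟩, rfl⟩
    · rintro ⟨e, ⟨he, h2⟩, rfl⟩; exact ⟨⟨e, he, rfl⟩, h2⟩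
  have hFsub : F ⊆ Mstar := Finset.filter_subset _ _
  have hFcard1 : (F.image Prod.fst).card = F.card :=
    Finset.card_image_of_injOn (hMfst.mono (by exact_mod_cast hFsub))
  set W := F.image Prod.snd with hW
  have hWcard : W.card = F.card :=
    Finset.card_image_of_injOn (hMsnd.mono (by exact_mod_cast hFsub))
  -- each b in W has S-degree lam
  have hWdeg : ∀ b ∈ W, (S.filter fun f => f.2 = b).card = lam := by
    intro b hb
    obtain ⟨e, he, rfl⟩ := Finset.mem_image.1 hb
    obtain ⟨heM, heA⟩ := Finset.mem_filter.1 he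
    apply hmax e (hME heM)
    rw [Finset.card_eq_zero, Finset.filter_eq_empty_iff]
    intro f hf hfa
    exact heA (Finset.mem_image.2 ⟨f, hf, hfa⟩)
  -- counting
  have hcount : lam * W.card ≤ S.card := by
    have hbu : (W.biUnion fun b => S.filter fun f => f.2 = b).card
        = ∑ b ∈ W, (S.filter fun f => f.2 = b).card := by
      apply Finset.card_biUnion
      intro x hx y hy hxy
      simp only [Finset.disjoint_left, Finset.mem_filter]
      rintro e ⟨_, h1⟩ ⟨_, h2⟩
      exact hxy (h1 ▸ h2)
    have hsum : ∑ b ∈ W, (S.filter fun f => f.2 = b).card = lam * W.card := by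
      rw [Finset.sum_congr rfl hWdeg, Finset.sum_const, smul_eq_mul, mul_comm]
    calc lam * W.card = (W.biUnion fun b => S.filter fun f => f.2 = b).card := by
          rw [hbu, hsum]
      _ ≤ S.card := Finset.card_le_card (Finset.biUnion_subset.2
          fun b _ => Finset.filter_subset _ _)
  have hkey : lam * (Mstar.image Prod.fst \ S.image Prod.fst).card
      ≤ (S.image Prod.fst).card := by
    rw [hFim, hFcard1, hScard]
    calc lam * F.card = lam * W.card := by rw [hWcard]
      _ ≤ S.card := hcount
  have hlampos : (0:ℝ) < (lam:ℝ) := by exact_mod_cast (by omega : 0 < lam)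
  have hkeyR : (lam:ℝ) * ((Mstar.image Prod.fst \ S.image Prod.fst).card : ℝ)
      ≤ ((S.image Prod.fst).card : ℝ) := by exact_mod_cast hkey
  constructor
  · rw [one_div, mul_comm, ← div_eq_mul_inv, le_div_iff₀ hlampos]
    linarith
  · -- |M*| ≤ |U| + |A(S)|
    have hMcard : Mstar.card = (Mstar.image Prod.fst).card :=
      (Finset.card_image_of_injOn hMfst).symm
    have hsplit : (Mstar.image Prod.fst).card
        ≤ (Mstar.image Prod.fst \ S.image Prod.fst).card + (S.image Prod.fst).card := by
      calc (Mstar.image Prod.fst).card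
          ≤ ((Mstar.image Prod.fst \ S.image Prod.fst) ∪ S.image Prod.fst).card :=
            Finset.card_le_card (fun a ha => Finset.mem_union.2 (by
              by_cases h : a ∈ S.image Prod.fst
              · exact Or.inr h
              · exact Or.inl (Finset.mem_sdiff.2 ⟨ha, h⟩)))
        _ ≤ _ := Finset.card_union_le _ _
    have hsplitR : (Mstar.card : ℝ)
        ≤ ((Mstar.image Prod.fst \ S.image Prod.fst).card : ℝ)
          + ((S.image Prod.fst).card : ℝ) := by
      rw [hMcard]; exact_mod_cast hsplit
    rw [div_mul_eq_mul_div, div_le_iff₀ (by linarith)]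
    nlinarith [hkeyR, hsplitR]
end

section
/- Let G = (A, B, E) be a bipartite graph, M₀ a maximal matching of G with |M₀| = (1/2 + ε)|M*| for a maximum matching M* and ε ≥ 0. Let S be an incomplete λ-bounded semi-matching with |A(S)| ≥ (λ/(λ+1))|M*|, and let M₁ = { e ∈ S : e joins a vertex of B covered by M₀ to a vertex of A not covered by M₀ }. Then |M₁| ≥ |A(S)| − |A(M₀)| ≥ (λ/(λ+1) − 1/2 − ε)|M*|. -/
/-- A maximal matching: no edge of `E` can be added. -/
def IsBipMaximalMatching {α β : Type*} (E M : Finset (α × β)) : Prop :=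
  IsBipMatching E M ∧ ∀ e ∈ E, e ∉ M → ∃ f ∈ M, f.1 = e.1 ∨ f.2 = e.2

/-- If `M₀` is a maximal matching with `|M₀| = (1/2 + ε)|M*|`, `S` an incomplete
`λ`-bounded semi-matching with `|A(S)| ≥ (λ/(λ+1))|M*|`, and
`M₁ = {e ∈ S : e joins B(M₀) to A \ A(M₀)}`, then
`|M₁| ≥ |A(S)| − |A(M₀)| ≥ (λ/(λ+1) − 1/2 − ε)|M*|`. -/
theorem m1_card_bound {α β : Type*} [DecidableEq α] [DecidableEq β]
    (E M₀ Mstar : Finset (α × β)) (ε : ℝ) (hε : 0 ≤ ε)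
    (hM0 : IsBipMaximalMatching E M₀) (hMstar : IsBipMaximumMatching E Mstar)
    (hcard : (M₀.card : ℝ) = (1 / 2 + ε) * (Mstar.card : ℝ))
    (lam : ℕ) (S : Finset (α × β)) (hSE : S ⊆ E)
    (hdegA : ∀ a : α, (S.filter fun f => f.1 = a).card ≤ 1)
    (hdegB : ∀ b : β, (S.filter fun f => f.2 = b).card ≤ lam)
    (hAS : ((lam : ℝ) / ((lam : ℝ) + 1)) * (Mstar.card : ℝ) ≤
      ((S.image Prod.fst).card : ℝ)) :
    (((S.image Prod.fst).card : ℝ) - ((M₀.image Prod.fst).card : ℝ) ≤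
      ((S.filter fun e => e.2 ∈ M₀.image Prod.snd ∧
        e.1 ∉ M₀.image Prod.fst).card : ℝ)) ∧
    ((lam : ℝ) / ((lam : ℝ) + 1) - 1 / 2 - ε) * (Mstar.card : ℝ) ≤
      ((S.image Prod.fst).card : ℝ) - ((M₀.image Prod.fst).card : ℝ) := by
  classical
  have hkey : (S.image Prod.fst) \ (M₀.image Prod.fst) ⊆
      (S.filter fun e => e.2 ∈ M₀.image Prod.snd ∧ e.1 ∉ M₀.image Prod.fst).image Prod.fst := by
    intro a ha
    obtain ⟨haS, haM⟩ := Finset.mem_sdiff.mp ha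
    obtain ⟨e, heS, hea⟩ := Finset.mem_image.mp haS
    have heM0 : e ∉ M₀ := fun h => haM (Finset.mem_image.mpr ⟨e, h, hea⟩)
    obtain ⟨f, hf, hcase⟩ := hM0.2 e (hSE heS) heM0
    have hB : e.2 ∈ M₀.image Prod.snd := by
      rcases hcase with h | h
      · exact absurd (Finset.mem_image.mpr ⟨f, hf, h.trans hea⟩) haM
      · exact Finset.mem_image.mpr ⟨f, hf, h⟩
    have hA : e.1 ∉ M₀.image Prod.fst := hea ▸ haM
    exact Finset.mem_image.mpr ⟨e, Finset.mem_filter.mpr ⟨heS, hB, hA⟩, hea⟩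
  have h1 : ((S.image Prod.fst).card : ℝ) - ((M₀.image Prod.fst).card : ℝ) ≤
      ((S.filter fun e => e.2 ∈ M₀.image Prod.snd ∧ e.1 ∉ M₀.image Prod.fst).card : ℝ) := by
    have := Finset.card_le_card hkey
    have hle := (Finset.card_image_le (f := Prod.fst)
      (s := S.filter fun e => e.2 ∈ M₀.image Prod.snd ∧ e.1 ∉ M₀.image Prod.fst))
    have hsd : (S.image Prod.fst).card ≤
        ((S.image Prod.fst) \ (M₀.image Prod.fst)).card + (M₀.image Prod.fst).card :=
      Finset.card_le_card_sdiff_add_card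
    have c1 := Nat.cast_le (α := ℝ) |>.mpr hsd
    have c2 := Nat.cast_le (α := ℝ) |>.mpr this
    have c3 := Nat.cast_le (α := ℝ) |>.mpr hle
    push_cast at c1 c2 c3 ⊢
    linarith
  have hinj : ((M₀.image Prod.fst).card : ℝ) = (M₀.card : ℝ) := by
    congr 1
    apply Finset.card_image_of_injOn
    intro e he f hf hef
    by_contra hne
    exact (hM0.1.2 e he f hf hne).1 hef
  have h2 : ((lam : ℝ) / ((lam : ℝ) + 1) - 1 / 2 - ε) * (Mstar.card : ℝ) ≤
      ((S.image Prod.fst).card : ℝ) - ((M₀.image Prod.fst).card : ℝ) := by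
    rw [hinj, hcard]
    nlinarith [hAS]
  exact ⟨h1, h2⟩
end

section
/- Let G = (A, B, E) be a bipartite graph, 0 < p ≤ 1, and let A' ⊆ A be a random subset where each a ∈ A is included independently with probability p. Let F be the set of edges of G with an endpoint in A', and let M' be the matching produced by the greedy matching algorithm on any fixed ordering of the edges of F. Then E[|M'|] ≥ (p/(1+p))·|opt(G)|, where opt(G) is a maximum matching of G. -/
/-- The greedy matching algorithm on a stream of bipartite edges: an arriving edge is
added whenever both its endpoints are currently unmatched. -/
def bipGreedy {α β : Type*} [DecidableEq α] [DecidableEq β]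
    (π : List (α × β)) : Finset (α × β) :=
  π.foldl (fun M e => if ∀ f ∈ M, f.1 ≠ e.1 ∧ f.2 ≠ e.2 then insert e M else M) ∅

section GreedyAux
variable {α β : Type*} [DecidableEq α] [DecidableEq β]

/-- One step of the greedy algorithm. -/
def gstep : Finset (α × β) → α × β → Finset (α × β) :=
  fun M e => if ∀ f ∈ M, f.1 ≠ e.1 ∧ f.2 ≠ e.2 then insert e M else M

lemma bipGreedy_eq (π : List (α × β)) : bipGreedy π = π.foldl gstep ∅ := rfl

lemma gstep_subset (M : Finset (α × β)) (e : α × β) : M ⊆ gstep M e := by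
  unfold gstep; split
  · exact Finset.subset_insert _ _
  · exact subset_rfl

lemma gfold_subset : ∀ (l : List (α × β)) (M : Finset (α × β)), M ⊆ l.foldl gstep M := by
  intro l
  induction l with
  | nil => intro M; simp
  | cons e l ih =>
    intro M
    exact (gstep_subset M e).trans (ih (gstep M e))

lemma gfold_max : ∀ (l : List (α × β)) (M : Finset (α × β)) (e : α × β), e ∈ l →
    ∃ f ∈ l.foldl gstep M, f.1 = e.1 ∨ f.2 = e.2 := by
  intro l
  induction l with
  | nil => intro M e he; simp at he
  | cons x l ih =>
    intro M e he
    rcases List.mem_cons.mp he with rfl | he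
    · by_cases h : ∀ f ∈ M, f.1 ≠ e.1 ∧ f.2 ≠ e.2
      · refine ⟨e, ?_, Or.inl rfl⟩
        have : e ∈ gstep M e := by unfold gstep; rw [if_pos h]; exact Finset.mem_insert_self _ _
        exact gfold_subset l (gstep M e) this
      · push_neg at h
        obtain ⟨f, hfM, hf⟩ := h
        refine ⟨f, gfold_subset l (gstep M e) (gstep_subset M e hfM), ?_⟩
        by_cases h1 : f.1 = e.1
        · exact Or.inl h1
        · exact Or.inr (hf h1)
    · exact ih (gstep M x) e he

lemma gfold_del (a : α) : ∀ (l : List (α × β)) (M : Finset (α × β)),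
    (∀ f ∈ l.foldl gstep M, f.1 ≠ a) →
    (l.filter (fun e => decide (e.1 ≠ a))).foldl gstep M = l.foldl gstep M := by
  intro l
  induction l with
  | nil => intro M _; rfl
  | cons e l ih =>
    intro M h
    by_cases hea : e.1 = a
    · have hdrop : (e :: l).filter (fun e => decide (e.1 ≠ a))
          = l.filter (fun e => decide (e.1 ≠ a)) := by
        rw [List.filter_cons_of_neg (by simpa using hea)]
      have hstep : gstep M e = M := by
        by_cases hc : ∀ f ∈ M, f.1 ≠ e.1 ∧ f.2 ≠ e.2
        · exfalso
          have he' : e ∈ (e :: l).foldl gstep M := by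
            have : e ∈ gstep M e := by
              unfold gstep; rw [if_pos hc]; exact Finset.mem_insert_self _ _
            exact gfold_subset l (gstep M e) this
          exact h e he' hea
        · unfold gstep; rw [if_neg hc]
      rw [hdrop]
      have h' : ∀ f ∈ l.foldl gstep M, f.1 ≠ a := by
        intro f hf
        apply h
        show f ∈ l.foldl gstep (gstep M e)
        rw [hstep]; exact hf
      rw [ih M h']
      show l.foldl gstep M = l.foldl gstep (gstep M e)
      rw [hstep]
    · have hkeep : (e :: l).filter (fun e => decide (e.1 ≠ a))
          = e :: l.filter (fun e => decide (e.1 ≠ a)) := by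
        rw [List.filter_cons_of_pos (by simpa using hea)]
      rw [hkeep]
      exact ih (gstep M e) h

/-- Deletion lemma: if the sampled vertex `a` ends up unmatched, the greedy run is
identical to the run without `a`. -/
lemma greedy_del (π : List (α × β)) (s : Finset α) (a : α) (has : a ∉ s)
    (h : ∀ f ∈ bipGreedy (π.filter fun e => decide (e.1 ∈ insert a s)), f.1 ≠ a) :
    bipGreedy (π.filter fun e => decide (e.1 ∈ insert a s))
      = bipGreedy (π.filter fun e => decide (e.1 ∈ s)) := by
  rw [bipGreedy_eq, bipGreedy_eq] at *
  rw [← gfold_del a _ ∅ h]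
  congr 1
  rw [List.filter_filter]
  apply List.filter_congr
  intro e _
  rcases eq_or_ne e.1 a with h1 | h1
  · simp [h1, has]
  · simp [h1, Finset.mem_insert]

end GreedyAux

section WeightsAux
variable {α : Type*} [DecidableEq α]

lemma powsum (x y : ℝ) : ∀ (T : Finset α),
    ∑ s ∈ T.powerset, x ^ s.card * y ^ (T.card - s.card) = (x + y) ^ T.card := by
  intro T
  induction T using Finset.induction_on with
  | empty => simp
  | @insert a T haT ih =>
    rw [Finset.sum_powerset_insert haT, Finset.card_insert_of_notMem haT]
    have h1 : ∑ t ∈ T.powerset, x ^ t.card * y ^ (T.card + 1 - t.card)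
        = y * ∑ t ∈ T.powerset, x ^ t.card * y ^ (T.card - t.card) := by
      rw [Finset.mul_sum]
      apply Finset.sum_congr rfl
      intro t ht
      have hc : t.card ≤ T.card := Finset.card_le_card (Finset.mem_powerset.mp ht)
      have : T.card + 1 - t.card = (T.card - t.card) + 1 := by omega
      rw [this, pow_succ]; ring
    have h2 : ∑ t ∈ T.powerset, x ^ (insert a t).card * y ^ (T.card + 1 - (insert a t).card)
        = x * ∑ t ∈ T.powerset, x ^ t.card * y ^ (T.card - t.card) := by
      rw [Finset.mul_sum]
      apply Finset.sum_congr rfl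
      intro t ht
      have hat : a ∉ t := fun h => haT (Finset.mem_powerset.mp ht h)
      rw [Finset.card_insert_of_notMem hat]
      have hc : t.card ≤ T.card := Finset.card_le_card (Finset.mem_powerset.mp ht)
      have : T.card + 1 - (t.card + 1) = T.card - t.card := by omega
      rw [this, pow_succ]; ring
    rw [h1, h2, ih, pow_succ]; ring

lemma pairing {A : Finset α} {a : α} (ha : a ∈ A) (f : Finset α → ℝ) :
    ∑ s ∈ A.powerset, f s
      = ∑ t ∈ (A.erase a).powerset, (f t + f (insert a t)) := by
  conv_lhs => rw [← Finset.insert_erase ha]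
  rw [Finset.sum_powerset_insert (Finset.notMem_erase a A), Finset.sum_add_distrib]

lemma weight_id {A : Finset α} {a : α} (ha : a ∈ A) (p : ℝ) {t : Finset α}
    (ht : t ∈ (A.erase a).powerset) :
    p * ((p ^ t.card * (1 - p) ^ (A.card - t.card))
        + p ^ (insert a t).card * (1 - p) ^ (A.card - (insert a t).card))
      = p ^ (insert a t).card * (1 - p) ^ (A.card - (insert a t).card) := by
  have htE := Finset.mem_powerset.mp ht
  have hat : a ∉ t := fun h => Finset.notMem_erase a A (htE h)
  have hcard : t.card ≤ A.card - 1 := by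
    have := Finset.card_le_card htE
    rwa [Finset.card_erase_of_mem ha] at this
  have hA1 : 1 ≤ A.card := Finset.card_pos.mpr ⟨a, ha⟩
  rw [Finset.card_insert_of_notMem hat]
  have h1 : A.card - t.card = (A.card - (t.card + 1)) + 1 := by omega
  rw [h1, pow_succ, pow_succ]; ring

end WeightsAux

open Classical in
/-- Real-valued indicator of a proposition. -/
noncomputable def rind (P : Prop) : ℝ := if P then 1 else 0

lemma rind_nonneg (P : Prop) : 0 ≤ rind P := by
  unfold rind; split <;> norm_num

lemma rind_le_one (P : Prop) : rind P ≤ 1 := by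
  unfold rind; split <;> norm_num

lemma rind_of_pos {P : Prop} (h : P) : rind P = 1 := by
  unfold rind; rw [if_pos h]

lemma rind_of_neg {P : Prop} (h : ¬ P) : rind P = 0 := by
  unfold rind; rw [if_neg h]

/-- Greedy on a random subset: if each `a ∈ A` is kept independently with probability
`p` and greedy is run (in any fixed arrival order `π`) on the edges with kept
`A`-endpoint, the expected size of the resulting matching is at least
`(p/(1+p))·|opt(G)|`. -/
theorem greedy_random_subset {α β : Type*} [DecidableEq α] [DecidableEq β]
    (A : Finset α) (π : List (α × β)) (hπnd : π.Nodup) (hπA : ∀ e ∈ π, e.1 ∈ A)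
    (p : ℝ) (hp0 : 0 < p) (hp1 : p ≤ 1)
    (Mstar : Finset (α × β)) (hMstar : IsBipMaximumMatching π.toFinset Mstar) :
    (p / (1 + p)) * (Mstar.card : ℝ) ≤
      ∑ s ∈ A.powerset, p ^ s.card * (1 - p) ^ (A.card - s.card) *
        ((bipGreedy (π.filter fun e => decide (e.1 ∈ s))).card : ℝ) := by
  classical
  set W : Finset α → ℝ := fun s => p ^ s.card * (1 - p) ^ (A.card - s.card) with hWdef
  set Msf : Finset α → Finset (α × β) :=
    fun s => bipGreedy (π.filter fun e => decide (e.1 ∈ s)) with hMsfdef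
  have hW0 : ∀ s, 0 ≤ W s := fun s =>
    mul_nonneg (pow_nonneg hp0.le _) (pow_nonneg (by linarith) _)
  have h1p : (0 : ℝ) < 1 + p := by linarith
  -- total weight is 1
  have totalW : ∑ s ∈ A.powerset, W s = 1 := by
    have := powsum p (1 - p) A
    simp only [hWdef]
    rw [this]
    norm_num
  -- the per-edge key inequality
  have key : ∀ e ∈ Mstar,
      p ≤ (∑ s ∈ A.powerset, W s * rind (∃ f ∈ Msf s, f.1 = e.1))
        + p * ∑ s ∈ A.powerset, W s * rind (∃ f ∈ Msf s, f.2 = e.2) := by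
    intro e he
    have heπ : e ∈ π := List.mem_toFinset.mp (hMstar.1.1 he)
    have haA : e.1 ∈ A := hπA e heπ
    have perpair : ∀ t ∈ (A.erase e.1).powerset,
        p * (W t + W (insert e.1 t))
          ≤ ((W t * rind (∃ f ∈ Msf t, f.1 = e.1)
              + W (insert e.1 t) * rind (∃ f ∈ Msf (insert e.1 t), f.1 = e.1))
            + p * (W t * rind (∃ f ∈ Msf t, f.2 = e.2)
              + W (insert e.1 t) * rind (∃ f ∈ Msf (insert e.1 t), f.2 = e.2))) := by
      intro t ht
      have hat : e.1 ∉ t := fun h => Finset.notMem_erase e.1 A (Finset.mem_powerset.mp ht h)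
      have hWid : p * (W t + W (insert e.1 t)) = W (insert e.1 t) := by
        simp only [hWdef]
        exact weight_id haA p ht
      have hnn1 : 0 ≤ W t * rind (∃ f ∈ Msf t, f.1 = e.1) :=
        mul_nonneg (hW0 t) (rind_nonneg _)
      have hnn2 : 0 ≤ W (insert e.1 t) * rind (∃ f ∈ Msf (insert e.1 t), f.1 = e.1) :=
        mul_nonneg (hW0 _) (rind_nonneg _)
      have hnn3 : 0 ≤ W t * rind (∃ f ∈ Msf t, f.2 = e.2) :=
        mul_nonneg (hW0 t) (rind_nonneg _)
      have hnn4 : 0 ≤ W (insert e.1 t) * rind (∃ f ∈ Msf (insert e.1 t), f.2 = e.2) :=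
        mul_nonneg (hW0 _) (rind_nonneg _)
      by_cases hmA : ∃ f ∈ Msf (insert e.1 t), f.1 = e.1
      · rw [hWid, rind_of_pos hmA]
        nlinarith [hW0 t, hW0 (insert e.1 t)]
      · -- e.1 is unmatched in the run on `insert e.1 t`
        have hnomatch : ∀ f ∈ Msf (insert e.1 t), f.1 ≠ e.1 := by
          intro f hf hfe
          exact hmA ⟨f, hf, hfe⟩
        have hdel : Msf (insert e.1 t) = Msf t := by
          simp only [hMsfdef]
          exact greedy_del π t e.1 hat hnomatch
        have hmB : ∃ f ∈ Msf (insert e.1 t), f.2 = e.2 := by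
          have hefil : e ∈ π.filter (fun e' => decide (e'.1 ∈ insert e.1 t)) :=
            List.mem_filter.mpr ⟨heπ, by simp⟩
          obtain ⟨f, hf, hcase⟩ := gfold_max _ ∅ e hefil
          rcases hcase with h1 | h2
          · exact absurd h1 (hnomatch f hf)
          · exact ⟨f, hf, h2⟩
        have hmBt : ∃ f ∈ Msf t, f.2 = e.2 := hdel ▸ hmB
        rw [rind_of_pos hmB, rind_of_pos hmBt]
        nlinarith [hW0 t, hW0 (insert e.1 t)]
    calc p = p * ∑ s ∈ A.powerset, W s := by rw [totalW, mul_one]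
      _ = ∑ t ∈ (A.erase e.1).powerset, p * (W t + W (insert e.1 t)) := by
          rw [pairing haA W, Finset.mul_sum]
      _ ≤ ∑ t ∈ (A.erase e.1).powerset,
            ((W t * rind (∃ f ∈ Msf t, f.1 = e.1)
              + W (insert e.1 t) * rind (∃ f ∈ Msf (insert e.1 t), f.1 = e.1))
            + p * (W t * rind (∃ f ∈ Msf t, f.2 = e.2)
              + W (insert e.1 t) * rind (∃ f ∈ Msf (insert e.1 t), f.2 = e.2))) :=
          Finset.sum_le_sum perpair
      _ = (∑ s ∈ A.powerset, W s * rind (∃ f ∈ Msf s, f.1 = e.1))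
            + p * ∑ s ∈ A.powerset, W s * rind (∃ f ∈ Msf s, f.2 = e.2) := by
          rw [Finset.sum_add_distrib, ← Finset.mul_sum,
            ← pairing haA (fun s => W s * rind (∃ f ∈ Msf s, f.1 = e.1)),
            ← pairing haA (fun s => W s * rind (∃ f ∈ Msf s, f.2 = e.2))]
  -- counting lemmas
  have countA : ∀ s ∈ A.powerset,
      ∑ e ∈ Mstar, rind (∃ f ∈ Msf s, f.1 = e.1) ≤ ((Msf s).card : ℝ) := by
    intro s _
    calc ∑ e ∈ Mstar, rind (∃ f ∈ Msf s, f.1 = e.1)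
        ≤ ∑ e ∈ Mstar, ∑ f ∈ Msf s, rind (f.1 = e.1) := by
          apply Finset.sum_le_sum
          intro e _
          by_cases h : ∃ f ∈ Msf s, f.1 = e.1
          · obtain ⟨f0, hf0, h01⟩ := h
            rw [rind_of_pos ⟨f0, hf0, h01⟩]
            have := Finset.single_le_sum (f := fun f => rind (f.1 = e.1))
              (fun f _ => rind_nonneg _) hf0
            simpa [rind_of_pos h01] using this
          · rw [rind_of_neg h]
            exact Finset.sum_nonneg fun f _ => rind_nonneg _
      _ = ∑ f ∈ Msf s, ∑ e ∈ Mstar, rind (f.1 = e.1) := Finset.sum_comm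
      _ ≤ ∑ f ∈ Msf s, 1 := by
          apply Finset.sum_le_sum
          intro f _
          have hcard : (Mstar.filter (fun e => f.1 = e.1)).card ≤ 1 := by
            apply Finset.card_le_one.mpr
            intro e1 h1 e2 h2
            rcases Finset.mem_filter.mp h1 with ⟨he1, hf1⟩
            rcases Finset.mem_filter.mp h2 with ⟨he2, hf2⟩
            by_contra hne
            exact (hMstar.1.2 e1 he1 e2 he2 hne).1 (hf1 ▸ hf2)
          calc ∑ e ∈ Mstar, rind (f.1 = e.1)
              = ((Mstar.filter (fun e => f.1 = e.1)).card : ℝ) := by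
                rw [Finset.card_filter]
                push_cast
                apply Finset.sum_congr rfl
                intro e _
                by_cases h : f.1 = e.1
                · rw [rind_of_pos h, if_pos h]
                · rw [rind_of_neg h, if_neg h]
            _ ≤ 1 := by exact_mod_cast hcard
      _ = ((Msf s).card : ℝ) := by simp
  have countB : ∀ s ∈ A.powerset,
      ∑ e ∈ Mstar, rind (∃ f ∈ Msf s, f.2 = e.2) ≤ ((Msf s).card : ℝ) := by
    intro s _
    calc ∑ e ∈ Mstar, rind (∃ f ∈ Msf s, f.2 = e.2)
        ≤ ∑ e ∈ Mstar, ∑ f ∈ Msf s, rind (f.2 = e.2) := by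
          apply Finset.sum_le_sum
          intro e _
          by_cases h : ∃ f ∈ Msf s, f.2 = e.2
          · obtain ⟨f0, hf0, h01⟩ := h
            rw [rind_of_pos ⟨f0, hf0, h01⟩]
            have := Finset.single_le_sum (f := fun f => rind (f.2 = e.2))
              (fun f _ => rind_nonneg _) hf0
            simpa [rind_of_pos h01] using this
          · rw [rind_of_neg h]
            exact Finset.sum_nonneg fun f _ => rind_nonneg _
      _ = ∑ f ∈ Msf s, ∑ e ∈ Mstar, rind (f.2 = e.2) := Finset.sum_comm
      _ ≤ ∑ f ∈ Msf s, 1 := by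
          apply Finset.sum_le_sum
          intro f _
          have hcard : (Mstar.filter (fun e => f.2 = e.2)).card ≤ 1 := by
            apply Finset.card_le_one.mpr
            intro e1 h1 e2 h2
            rcases Finset.mem_filter.mp h1 with ⟨he1, hf1⟩
            rcases Finset.mem_filter.mp h2 with ⟨he2, hf2⟩
            by_contra hne
            exact (hMstar.1.2 e1 he1 e2 he2 hne).2 (hf1 ▸ hf2)
          calc ∑ e ∈ Mstar, rind (f.2 = e.2)
              = ((Mstar.filter (fun e => f.2 = e.2)).card : ℝ) := by
                rw [Finset.card_filter]
                push_cast
                apply Finset.sum_congr rfl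
                intro e _
                by_cases h : f.2 = e.2
                · rw [rind_of_pos h, if_pos h]
                · rw [rind_of_neg h, if_neg h]
            _ ≤ 1 := by exact_mod_cast hcard
      _ = ((Msf s).card : ℝ) := by simp
  set T : ℝ := ∑ s ∈ A.powerset, W s * ((Msf s).card : ℝ) with hTdef
  have sumA : ∑ e ∈ Mstar, ∑ s ∈ A.powerset, W s * rind (∃ f ∈ Msf s, f.1 = e.1) ≤ T := by
    rw [Finset.sum_comm]
    apply Finset.sum_le_sum
    intro s hs
    rw [← Finset.mul_sum]
    exact mul_le_mul_of_nonneg_left (countA s hs) (hW0 s)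
  have sumB : ∑ e ∈ Mstar, ∑ s ∈ A.powerset, W s * rind (∃ f ∈ Msf s, f.2 = e.2) ≤ T := by
    rw [Finset.sum_comm]
    apply Finset.sum_le_sum
    intro s hs
    rw [← Finset.mul_sum]
    exact mul_le_mul_of_nonneg_left (countB s hs) (hW0 s)
  have main : p * (Mstar.card : ℝ) ≤ (1 + p) * T := by
    have h2 : ∑ _e ∈ Mstar, p
        ≤ ∑ e ∈ Mstar, ((∑ s ∈ A.powerset, W s * rind (∃ f ∈ Msf s, f.1 = e.1))
          + p * ∑ s ∈ A.powerset, W s * rind (∃ f ∈ Msf s, f.2 = e.2)) :=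
      Finset.sum_le_sum key
    rw [Finset.sum_const, nsmul_eq_mul, Finset.sum_add_distrib] at h2
    rw [← Finset.mul_sum] at h2
    have hb : p * ∑ e ∈ Mstar, ∑ s ∈ A.powerset, W s * rind (∃ f ∈ Msf s, f.2 = e.2)
        ≤ p * T := mul_le_mul_of_nonneg_left sumB hp0.le
    nlinarith [sumA]
  rw [div_mul_eq_mul_div, div_le_iff₀ h1p]
  show p * (Mstar.card : ℝ) ≤ T * (1 + p)
  linarith [main]
end

section
/- Let G = (A, B, E) be a bipartite graph, M₀ a maximal matching with |M₀| = (1/2 + ε)|M*| for a maximum matching M* and ε ≥ 0, and M₁ a matching between B(M₀) and A \ A(M₀). Let A' = { a ∈ A : ∃ b with ab ∈ M₀ and b covered by M₁ }. Then the maximum matching between A' and B \ B(M₀) has size at least |M₁| − 4ε|M*|. -/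
/-- In a matching, the first projection is injective on the matching. -/
lemma matching_injOn_fst {α β : Type*} {E M : Finset (α × β)}
    (h : IsBipMatching E M) : Set.InjOn Prod.fst (M : Set (α × β)) := by
  intro e he f hf hef
  by_contra hne
  exact (h.2 e he f hf hne).1 hef

lemma matching_injOn_snd {α β : Type*} {E M : Finset (α × β)}
    (h : IsBipMatching E M) : Set.InjOn Prod.snd (M : Set (α × β)) := by
  intro e he f hf hef
  by_contra hne
  exact (h.2 e he f hf hne).2 hef

/-- Let `M₀` be a maximal matching with `|M₀| = (1/2 + ε)|M*|` and `M₁` a matching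
between `B(M₀)` and `A \ A(M₀)`. With
`A' = {a : ∃ b, ab ∈ M₀ and b covered by M₁}`, the maximum matching between `A'` and
`B \ B(M₀)` has size at least `|M₁| − 4ε|M*|` (stated as: there is such a matching). -/
theorem opt_between_Aprime_and_unmatchedB {α β : Type*} [DecidableEq α] [DecidableEq β]
    (E M₀ Mstar M₁ : Finset (α × β)) (ε : ℝ) (hε : 0 ≤ ε)
    (hM0 : IsBipMaximalMatching E M₀) (hMstar : IsBipMaximumMatching E Mstar)
    (hcard : (M₀.card : ℝ) = (1 / 2 + ε) * (Mstar.card : ℝ))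
    (hM1 : IsBipMatching E M₁)
    (hM1e : ∀ e ∈ M₁, e.2 ∈ M₀.image Prod.snd ∧ e.1 ∉ M₀.image Prod.fst) :
    ∃ N : Finset (α × β), IsBipMatching E N ∧
      (∀ e ∈ N, (∃ b : β, (e.1, b) ∈ M₀ ∧ b ∈ M₁.image Prod.snd) ∧
        e.2 ∉ M₀.image Prod.snd) ∧
      (M₁.card : ℝ) - 4 * ε * (Mstar.card : ℝ) ≤ (N.card : ℝ) := by
  classical
  obtain ⟨hM0m, hM0max⟩ := hM0
  obtain ⟨hMsm, _⟩ := hMstar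
  set Bcov := M₀.image Prod.snd with hBcov
  -- good M₀ edges: first endpoint has an Mstar partner outside Bcov
  set S := M₀.filter (fun g => ∃ c, (g.1, c) ∈ Mstar ∧ c ∉ Bcov) with hSdef
  -- the candidate matching
  set N := Mstar.filter (fun f =>
      ((∃ b : β, (f.1, b) ∈ M₀ ∧ b ∈ M₁.image Prod.snd) ∧ f.2 ∉ Bcov)) with hNdef
  have hNsub : N ⊆ Mstar := Finset.filter_subset _ _
  have hNmatch : IsBipMatching E N :=
    ⟨hNsub.trans hMsm.1, fun e he f hf hne => hMsm.2 e (hNsub he) f (hNsub hf) hne⟩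
  refine ⟨N, hNmatch, fun e he => (Finset.mem_filter.1 he).2, ?_⟩
  -- Counting 1 : Mstar.card ≤ M₀.card + S.card
  have hcount1 : Mstar.card ≤ M₀.card + S.card := by
    have hsplit := Finset.card_filter_add_card_filter_not
      (s := Mstar) (p := fun f => f.2 ∈ Bcov)
    set T₁ := Mstar.filter (fun f => f.2 ∈ Bcov) with hT1
    set T₂ := Mstar.filter (fun f => ¬ f.2 ∈ Bcov) with hT2
    have h1 : T₁.card ≤ M₀.card := by
      have hinj : (T₁.image Prod.snd).card = T₁.card :=
        Finset.card_image_of_injOn ((matching_injOn_snd hMsm).mono (by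
          intro x hx; exact Finset.filter_subset _ _ hx))
      have hsub : T₁.image Prod.snd ⊆ Bcov := by
        intro b hb
        obtain ⟨f, hf, rfl⟩ := Finset.mem_image.1 hb
        exact (Finset.mem_filter.1 hf).2
      calc T₁.card = (T₁.image Prod.snd).card := hinj.symm
        _ ≤ Bcov.card := Finset.card_le_card hsub
        _ ≤ M₀.card := Finset.card_image_le
    have h2 : T₂.card ≤ S.card := by
      have hinj : (T₂.image Prod.fst).card = T₂.card :=
        Finset.card_image_of_injOn ((matching_injOn_fst hMsm).mono (by
          intro x hx; exact Finset.filter_subset _ _ hx))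
      have hinjS : (S.image Prod.fst).card = S.card :=
        Finset.card_image_of_injOn ((matching_injOn_fst hM0m).mono (by
          intro x hx; exact Finset.filter_subset _ _ hx))
      have hsub : T₂.image Prod.fst ⊆ S.image Prod.fst := by
        intro a ha
        obtain ⟨f, hf, rfl⟩ := Finset.mem_image.1 ha
        obtain ⟨hfMs, hfB⟩ := Finset.mem_filter.1 hf
        have hfnotM0 : f ∉ M₀ := by
          intro hcontra
          exact hfB (Finset.mem_image.2 ⟨f, hcontra, rfl⟩)
        obtain ⟨g, hg, hgor⟩ := hM0max f (hMsm.1 hfMs) hfnotM0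
        rcases hgor with hga | hgb
        · refine Finset.mem_image.2 ⟨g, Finset.mem_filter.2 ⟨hg, ⟨f.2, ?_, hfB⟩⟩, hga⟩
          rwa [hga]
        · exact absurd (Finset.mem_image.2 ⟨g, hg, hgb⟩) hfB
      calc T₂.card = (T₂.image Prod.fst).card := hinj.symm
        _ ≤ (S.image Prod.fst).card := Finset.card_le_card hsub
        _ = S.card := hinjS
    omega
  -- split M₁ into good and bad edges
  set P := fun e : α × β => ∃ a c, (a, e.2) ∈ M₀ ∧ (a, c) ∈ Mstar ∧ c ∉ Bcov with hP
  set M₁g := M₁.filter P with hM1g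
  set M₁b := M₁.filter (fun e => ¬ P e) with hM1b
  have hsplit1 : M₁g.card + M₁b.card = M₁.card :=
    Finset.card_filter_add_card_filter_not (s := M₁) (p := P)
  -- Counting 2 : bad M₁ edges inject into bad M₀ edges
  have hcount2 : M₁b.card + S.card ≤ M₀.card := by
    have hbadsplit : S.card + (M₀.filter (fun g => ¬ ∃ c, (g.1, c) ∈ Mstar ∧ c ∉ Bcov)).card
        = M₀.card :=
      Finset.card_filter_add_card_filter_not (s := M₀) _
    set Q := M₀.filter (fun g => ¬ ∃ c, (g.1, c) ∈ Mstar ∧ c ∉ Bcov) with hQ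
    have h3 : M₁b.card ≤ Q.card := by
      have hinj : (M₁b.image Prod.snd).card = M₁b.card :=
        Finset.card_image_of_injOn ((matching_injOn_snd hM1).mono (by
          intro x hx; exact Finset.filter_subset _ _ hx))
      have hinjQ : (Q.image Prod.snd).card = Q.card :=
        Finset.card_image_of_injOn ((matching_injOn_snd hM0m).mono (by
          intro x hx; exact Finset.filter_subset _ _ hx))
      have hsub : M₁b.image Prod.snd ⊆ Q.image Prod.snd := by
        intro b hb
        obtain ⟨e, he, rfl⟩ := Finset.mem_image.1 hb
        obtain ⟨heM1, hePn⟩ := Finset.mem_filter.1 he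
        obtain ⟨g, hg, hgb⟩ := Finset.mem_image.1 (hM1e e heM1).1
        refine Finset.mem_image.2 ⟨g, Finset.mem_filter.2 ⟨hg, ?_⟩, hgb⟩
        intro ⟨c, hc1, hc2⟩
        refine hePn ⟨g.1, c, ?_, hc1, hc2⟩
        rw [← hgb]
        exact hg
      calc M₁b.card = (M₁b.image Prod.snd).card := hinj.symm
        _ ≤ (Q.image Prod.snd).card := Finset.card_le_card hsub
        _ = Q.card := hinjQ
    omega
  -- Counting 3 : good M₁ edges inject into N
  have hcount3 : M₁g.card ≤ N.card := by
    set φ : α × β → α × β := fun e =>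
      if h : ∃ p : α × β, (p.1, e.2) ∈ M₀ ∧ p ∈ Mstar ∧ p.2 ∉ Bcov then h.choose else e
      with hφ
    apply Finset.card_le_card_of_injOn φ
    · intro e he
      obtain ⟨heM1, a, c, h1, h2, h3⟩ := Finset.mem_filter.1 he
      have hex : ∃ p : α × β, (p.1, e.2) ∈ M₀ ∧ p ∈ Mstar ∧ p.2 ∉ Bcov :=
        ⟨(a, c), h1, h2, h3⟩
      have hval : φ e = hex.choose := by rw [hφ]; simp [hex]
      obtain ⟨hp1, hp2, hp3⟩ := hex.choose_spec
      rw [hval]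
      exact Finset.mem_filter.2 ⟨hp2,
        ⟨e.2, hp1, Finset.mem_image.2 ⟨e, heM1, rfl⟩⟩, hp3⟩
    · intro e he f hf hef
      obtain ⟨heM1, a, c, h1, h2, h3⟩ := Finset.mem_filter.1 he
      obtain ⟨hfM1, a', c', h1', h2', h3'⟩ := Finset.mem_filter.1 hf
      have hexe : ∃ p : α × β, (p.1, e.2) ∈ M₀ ∧ p ∈ Mstar ∧ p.2 ∉ Bcov :=
        ⟨(a, c), h1, h2, h3⟩
      have hexf : ∃ p : α × β, (p.1, f.2) ∈ M₀ ∧ p ∈ Mstar ∧ p.2 ∉ Bcov :=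
        ⟨(a', c'), h1', h2', h3'⟩
      have hvale : φ e = hexe.choose := by rw [hφ]; simp [hexe]
      have hvalf : φ f = hexf.choose := by rw [hφ]; simp [hexf]
      have heq : hexe.choose = hexf.choose := by rw [← hvale, ← hvalf]; exact hef
      obtain ⟨hp1, _, _⟩ := hexe.choose_spec
      obtain ⟨hq1, _, _⟩ := hexf.choose_spec
      rw [heq] at hp1
      -- same first coordinate in M₀ forces e.2 = f.2
      have hsnd : e.2 = f.2 := by
        by_contra hne
        have hedne : (hexf.choose.1, e.2) ≠ (hexf.choose.1, f.2) := by
          simp [hne]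
        exact (hM0m.2 _ hp1 _ hq1 hedne).1 rfl
      -- same second coordinate in M₁ forces e = f
      by_contra hne
      exact (hM1.2 e heM1 f hfM1 hne).2 hsnd
  -- arithmetic conclusion
  have h1 : (M₁g.card : ℝ) + (M₁b.card : ℝ) = (M₁.card : ℝ) := by
    exact_mod_cast congrArg (Nat.cast : ℕ → ℝ) hsplit1
  have h2 : (M₁b.card : ℝ) + (S.card : ℝ) ≤ (M₀.card : ℝ) := by exact_mod_cast hcount2
  have h3 : (Mstar.card : ℝ) ≤ (M₀.card : ℝ) + (S.card : ℝ) := by exact_mod_cast hcount1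
  have h4 : (M₁g.card : ℝ) ≤ (N.card : ℝ) := by exact_mod_cast hcount3
  have h5 : (0:ℝ) ≤ (Mstar.card : ℝ) := Nat.cast_nonneg _
  have hcard' : (M₀.card : ℝ) = 1 / 2 * (Mstar.card : ℝ) + ε * (Mstar.card : ℝ) := by
    rw [hcard]; ring
  have h6 : (0:ℝ) ≤ ε * (Mstar.card : ℝ) := mul_nonneg hε h5
  have h7 : 4 * ε * (Mstar.card : ℝ) = 4 * (ε * (Mstar.card : ℝ)) := by ring
  rw [h7]
  linarith
end

section
/- Let G = (A, B, E) be a bipartite graph, M₀ a maximal matching of G, M' any matching of G whose edges all have an A-endpoint in a subset A' ⊆ A, and M₁ = { e ∈ M' : e joins B(M₀) to A \ A(M₀) }. Then the number of edges ab ∈ M₀ such that some edge bc ∈ M₁ exists satisfies |{ ab ∈ M₀ : ∃c, bc ∈ M₁ }| ≥ |M'| − |A(M₀) ∩ A'|. -/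
open Finset

namespace IsBipMatching

variable {α β : Type*} {E M : Finset (α × β)}

theorem injOn_fst_s16 (hM : IsBipMatching E M) : Set.InjOn Prod.fst (M : Set (α × β)) :=
  fun e he f hf hef => by_contra fun hne => (hM.2 e he f hf hne).1 hef

theorem injOn_snd_s16 (hM : IsBipMatching E M) : Set.InjOn Prod.snd (M : Set (α × β)) :=
  fun e he f hf hef => by_contra fun hne => (hM.2 e he f hf hne).2 hef

end IsBipMatching

theorem IsBipMaximalMatching.snd_mem_image_snd_of_fst_notMem {α β : Type*} [DecidableEq α]
    [DecidableEq β] {E M : Finset (α × β)} (hM : IsBipMaximalMatching E M) {e : α × β}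
    (he : e ∈ E) (hfst : e.1 ∉ M.image Prod.fst) : e.2 ∈ M.image Prod.snd := by
  have heM : e ∉ M := fun h => hfst (mem_image_of_mem _ h)
  obtain ⟨f, hfM, hf | hf⟩ := hM.2 e he heM
  · exact absurd (hf ▸ mem_image_of_mem Prod.fst hfM) hfst
  · exact hf ▸ mem_image_of_mem Prod.snd hfM

theorem card_filter_fst_mem_le_card_inter {α β : Type*} [DecidableEq α] {M : Finset (α × β)}
    (hM : Set.InjOn Prod.fst (M : Set (α × β))) {S A' : Finset α} (hA' : ∀ e ∈ M, e.1 ∈ A') :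
    (M.filter fun e => e.1 ∈ S).card ≤ (S ∩ A').card := by
  refine card_le_card_of_injOn Prod.fst (fun e he => ?_)
    (hM.mono (coe_subset.mpr (filter_subset _ _)))
  rw [mem_coe, mem_filter] at he
  exact mem_inter.mpr ⟨he.2, hA' e he.1⟩

theorem card_le_card_filter_exists_snd_eq {α β : Type*} [DecidableEq β]
    {M N : Finset (α × β)} (hN : Set.InjOn Prod.snd (N : Set (α × β)))
    (hNM : ∀ f ∈ N, f.2 ∈ M.image Prod.snd) :
    N.card ≤ (M.filter fun e => ∃ f ∈ N, f.2 = e.2).card := by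
  have hsub : N.image Prod.snd ⊆ (M.filter fun e => ∃ f ∈ N, f.2 = e.2).image Prod.snd := by
    intro b hb
    obtain ⟨f, hfN, rfl⟩ := mem_image.mp hb
    obtain ⟨e, heM, he⟩ := mem_image.mp (hNM f hfN)
    exact mem_image.mpr ⟨e, mem_filter.mpr ⟨heM, f, hfN, he.symm⟩, he⟩
  calc N.card = (N.image Prod.snd).card := (card_image_of_injOn hN).symm
    _ ≤ _ := card_le_card hsub
    _ ≤ _ := card_image_le

/-- For a maximal matching `M₀`, a matching `M'` all of whose edges have `A`-endpoint
in `A'`, and `M₁ = {e ∈ M' : e joins B(M₀) to A \ A(M₀)}`, the number of edges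
`ab ∈ M₀` such that some `bc ∈ M₁` exists is at least `|M'| − |A(M₀) ∩ A'|`. -/
theorem m0_edges_with_m1_partner {α β : Type*} [DecidableEq α] [DecidableEq β]
    (E M₀ M' : Finset (α × β)) (A' : Finset α)
    (hM0 : IsBipMaximalMatching E M₀) (hM' : IsBipMatching E M')
    (hA' : ∀ e ∈ M', e.1 ∈ A') :
    ((M'.card : ℝ) - (((M₀.image Prod.fst) ∩ A').card : ℝ)) ≤
      ((M₀.filter (fun (e : α × β) => ∃ f ∈ M'.filter (fun (g : α × β) =>
          g.2 ∈ M₀.image Prod.snd ∧ g.1 ∉ M₀.image Prod.fst), f.2 = e.2)).card : ℝ) := by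
  set M₁ := M'.filter fun g => g.2 ∈ M₀.image Prod.snd ∧ g.1 ∉ M₀.image Prod.fst
  have huncovered_sub : (M'.filter fun g => g.1 ∉ M₀.image Prod.fst) ⊆ M₁ := by
    intro e he
    obtain ⟨heM', hfst⟩ := mem_filter.mp he
    exact mem_filter.mpr
      ⟨heM', hM0.snd_mem_image_snd_of_fst_notMem (hM'.1 heM') hfst, hfst⟩
  have hcovered := card_filter_fst_mem_le_card_inter (S := M₀.image Prod.fst) hM'.injOn_fst_s16 hA'
  have hM₁ : M₁.card ≤ _ := card_le_card_filter_exists_snd_eq (M := M₀)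
    (hM'.injOn_snd_s16.mono (coe_subset.mpr (filter_subset _ _))) fun f hf => (mem_filter.mp hf).2.1
  have hsplit := card_filter_add_card_filter_not (s := M')
    (fun g : α × β => g.1 ∈ M₀.image Prod.fst)
  have huncovered := card_le_card huncovered_sub
  rw [sub_le_iff_le_add']
  exact_mod_cast (by omega)
end

section
/- Let G = (A, B, E) be a bipartite graph, M₀ a maximal matching and M* a maximum matching with |M₀| = (1/2 + ε)|M*|, and M₁ a matching between B(M₀) and A \ A(M₀), so that every edge bc ∈ M₁ together with the edge ab ∈ M₀ forms a path a–b–c. Let F₂ be the set of edges of G between { a : ∃b,c with ab ∈ M₀, bc ∈ M₁ } and B \ B(M₀), and let M₂ be any maximal matching of F₂. Then the matching M obtained from M₀ by augmenting along the 3-augmenting paths formed by M₁, M₀, M₂ satisfies |M| = |M₀| + |M₂|. -/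
/-- Augmenting `M₀` along the 3-augmenting paths formed by `M₁, M₀, M₂` (each edge
`ad ∈ M₂` completes a path `d–a–b–c` with `ab ∈ M₀`, `cb ∈ M₁`): the resulting
matching `M` (replace each augmented `M₀`-edge by the corresponding `M₂`- and
`M₁`-edges) has `|M| = |M₀| + |M₂|`. -/
theorem augmented_matching_card {α β : Type*} [DecidableEq α] [DecidableEq β]
    (E M₀ Mstar M₁ M₂ F₂ : Finset (α × β)) (ε : ℝ)
    (hM0 : IsBipMaximalMatching E M₀) (hMstar : IsBipMaximumMatching E Mstar)
    (hcard : (M₀.card : ℝ) = (1 / 2 + ε) * (Mstar.card : ℝ))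
    (hM1 : IsBipMatching E M₁)
    (hM1e : ∀ e ∈ M₁, e.1 ∉ M₀.image Prod.fst ∧ e.2 ∈ M₀.image Prod.snd)
    (hF2 : F₂ = E.filter (fun (e : α × β) => e.2 ∉ M₀.image Prod.snd ∧
      ∃ f ∈ M₀, f.1 = e.1 ∧ ∃ g ∈ M₁, g.2 = f.2))
    (hM2 : IsBipMatching E M₂) (hM2F : M₂ ⊆ F₂)
    (hM2max : ∀ e ∈ F₂, e ∉ M₂ → ∃ f ∈ M₂, f.1 = e.1 ∨ f.2 = e.2) :
    ((M₀.filter (fun (e : α × β) => e.1 ∉ M₂.image Prod.fst)) ∪ M₂ ∪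
        (M₁.filter (fun (e : α × β) =>
          ∃ f ∈ M₀, f.2 = e.2 ∧ f.1 ∈ M₂.image Prod.fst))).card =
      M₀.card + M₂.card := by
  classical
  obtain ⟨⟨hM0E, hM0m⟩, -⟩ := hM0
  obtain ⟨hM1E, hM1m⟩ := hM1
  obtain ⟨hM2E, hM2m⟩ := hM2
  have uniq0 : ∀ f ∈ M₀, ∀ f' ∈ M₀, f.1 = f'.1 → f = f' := by
    intro f hf f' hf' h; by_contra hne; exact (hM0m f hf f' hf' hne).1 h
  have uniq0' : ∀ f ∈ M₀, ∀ f' ∈ M₀, f.2 = f'.2 → f = f' := by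
    intro f hf f' hf' h; by_contra hne; exact (hM0m f hf f' hf' hne).2 h
  have uniq1' : ∀ f ∈ M₁, ∀ f' ∈ M₁, f.2 = f'.2 → f = f' := by
    intro f hf f' hf' h; by_contra hne; exact (hM1m f hf f' hf' hne).2 h
  have hM2F2 : ∀ e ∈ M₂, e.2 ∉ M₀.image Prod.snd ∧
      ∃ f ∈ M₀, f.1 = e.1 ∧ ∃ g ∈ M₁, g.2 = f.2 := by
    intro e he
    have := hM2F he
    rw [hF2, Finset.mem_filter] at this
    exact this.2
  set P : α × β → Prop := fun e => e.1 ∈ M₂.image Prod.fst with hP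
  set Q : α × β → Prop := fun e => ∃ f ∈ M₀, f.2 = e.2 ∧ f.1 ∈ M₂.image Prod.fst with hQ
  -- disjointness
  have d1 : Disjoint (M₀.filter (fun e => ¬ P e)) M₂ := by
    rw [Finset.disjoint_left]
    intro e he he2
    exact (Finset.mem_filter.1 he).2 (Finset.mem_image_of_mem Prod.fst he2)
  have d2 : Disjoint ((M₀.filter (fun e => ¬ P e)) ∪ M₂) (M₁.filter Q) := by
    rw [Finset.disjoint_right]
    intro e he heu
    have he1 := Finset.mem_filter.1 he
    obtain ⟨hnot1, hin2⟩ := hM1e e he1.1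
    rcases Finset.mem_union.1 heu with h | h
    · exact hnot1 (Finset.mem_image_of_mem Prod.fst (Finset.mem_filter.1 h).1)
    · exact (hM2F2 e h).1 hin2
  rw [Finset.card_union_of_disjoint d2, Finset.card_union_of_disjoint d1]
  -- counting via coordinates
  have k1 : (M₀.filter P).card = M₂.card := by
    have h1 : (M₀.filter P).image Prod.fst = M₂.image Prod.fst := by
      apply Finset.Subset.antisymm
      · intro a ha
        obtain ⟨f, hf, rfl⟩ := Finset.mem_image.1 ha
        exact (Finset.mem_filter.1 hf).2
      · intro a ha
        obtain ⟨e, he, rfl⟩ := Finset.mem_image.1 ha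
        obtain ⟨-, f, hf, hf1, -⟩ := hM2F2 e he
        exact Finset.mem_image.2 ⟨f, Finset.mem_filter.2
          ⟨hf, by rw [hP]; simp only []; rw [hf1]; exact Finset.mem_image_of_mem _ he⟩, hf1⟩
    have i1 : ((M₀.filter P).image Prod.fst).card = (M₀.filter P).card :=
      Finset.card_image_of_injOn (fun x hx y hy h =>
        uniq0 x (Finset.mem_filter.1 (by exact_mod_cast hx)).1
          y (Finset.mem_filter.1 (by exact_mod_cast hy)).1 h)
    have i2 : (M₂.image Prod.fst).card = M₂.card :=
      Finset.card_image_of_injOn (fun x hx y hy h => by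
        by_contra hne
        exact (hM2m x (by exact_mod_cast hx) y (by exact_mod_cast hy) hne).1 h)
    rw [← i1, h1, i2]
  have m1 : (M₁.filter Q).card = (M₀.filter P).card := by
    have h1 : (M₁.filter Q).image Prod.snd = (M₀.filter P).image Prod.snd := by
      apply Finset.Subset.antisymm
      · intro b hb
        obtain ⟨g, hg, rfl⟩ := Finset.mem_image.1 hb
        obtain ⟨f, hf, hf2, hfi⟩ := (Finset.mem_filter.1 hg).2
        exact Finset.mem_image.2 ⟨f, Finset.mem_filter.2 ⟨hf, hfi⟩, hf2⟩
      · intro b hb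
        obtain ⟨f, hf, rfl⟩ := Finset.mem_image.1 hb
        obtain ⟨hf0, hfi⟩ := Finset.mem_filter.1 hf
        obtain ⟨e, he, he1⟩ := Finset.mem_image.1 hfi
        obtain ⟨-, f', hf', hf'1, g, hg, hg2⟩ := hM2F2 e he
        have hff' : f = f' := uniq0 f hf0 f' hf' (by rw [hf'1, he1])
        refine Finset.mem_image.2 ⟨g, Finset.mem_filter.2 ⟨hg, f, hf0, ?_, hfi⟩, ?_⟩
        · rw [hff', hg2]
        · rw [hg2, ← hff']
    have i1 : ((M₁.filter Q).image Prod.snd).card = (M₁.filter Q).card :=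
      Finset.card_image_of_injOn (fun x hx y hy h =>
        uniq1' x (Finset.mem_filter.1 (by exact_mod_cast hx)).1
          y (Finset.mem_filter.1 (by exact_mod_cast hy)).1 h)
    have i2 : ((M₀.filter P).image Prod.snd).card = (M₀.filter P).card :=
      Finset.card_image_of_injOn (fun x hx y hy h =>
        uniq0' x (Finset.mem_filter.1 (by exact_mod_cast hx)).1
          y (Finset.mem_filter.1 (by exact_mod_cast hy)).1 h)
    rw [← i1, h1, i2]
  have hsplit : (M₀.filter P).card + (M₀.filter (fun e => ¬ P e)).card = M₀.card :=
    Finset.card_filter_add_card_filter_not _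
  omega
end

section
/- Let M₀ be a maximal matching of a graph G and M* a maximum matching, and suppose |{ e ∈ M₀ : e is 3-augmentable }| ≥ t. Then the size of a maximum matching between the set of vertices unmatched by M₀ that are endpoints of 3-augmenting paths and the matched side of M₀ is at least t; concretely in the bipartite case G = (A,B,E): opt(A \ A(M₀), B(M₀)) ≥ (number of 3-augmentable edges of M₀). -/
/-- An edge `ab ∈ M₀` is 3-augmentable w.r.t. `M*` if there are `da, bc ∈ M*` with
`d ∈ B \ B(M₀)` and `c ∈ A \ A(M₀)`, forming a 3-augmenting path.  The edges `bc` form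
a matching between `A \ A(M₀)` and `B(M₀)` whose size is at least the number of
3-augmentable edges of `M₀`: `opt(A \ A(M₀), B(M₀)) ≥ #3-augmentable edges`. -/
theorem opt_ge_three_augmentable {α β : Type*} [DecidableEq α] [DecidableEq β]
    (E M₀ Mstar : Finset (α × β))
    (hM0 : IsBipMaximalMatching E M₀) (hMstar : IsBipMaximumMatching E Mstar) :
    ∃ N : Finset (α × β), IsBipMatching E N ∧
      (∀ e ∈ N, e.1 ∉ M₀.image Prod.fst ∧ e.2 ∈ M₀.image Prod.snd) ∧
      {e : α × β | e ∈ M₀ ∧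
          (∃ d : β, (e.1, d) ∈ Mstar ∧ d ∉ M₀.image Prod.snd) ∧
          (∃ c : α, (c, e.2) ∈ Mstar ∧ c ∉ M₀.image Prod.fst)}.ncard ≤ N.card := by
  classical
  set P : α × β → Prop := fun e =>
    (∃ d : β, (e.1, d) ∈ Mstar ∧ d ∉ M₀.image Prod.snd) ∧
    (∃ c : α, (c, e.2) ∈ Mstar ∧ c ∉ M₀.image Prod.fst) with hP
  set S : Finset (α × β) := M₀.filter P with hS
  have hsetS : {e : α × β | e ∈ M₀ ∧ P e} = ↑S := by
    ext e; simp [hS]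
  -- choice function
  set f : α × β → α × β := fun e =>
    if h : ∃ c : α, (c, e.2) ∈ Mstar ∧ c ∉ M₀.image Prod.fst then (h.choose, e.2) else e
    with hf
  have hfS : ∀ e ∈ S, (f e).2 = e.2 ∧ f e ∈ Mstar ∧ (f e).1 ∉ M₀.image Prod.fst := by
    intro e he
    rw [hS, Finset.mem_filter] at he
    have h := he.2.2
    have hfe : f e = (h.choose, e.2) := dif_pos h
    rw [hfe]
    exact ⟨rfl, h.choose_spec.1, h.choose_spec.2⟩
  refine ⟨S.image f, ⟨?_, ?_⟩, ?_, ?_⟩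
  · intro x hx
    obtain ⟨e, he, rfl⟩ := Finset.mem_image.mp hx
    exact hMstar.1.1 (hfS e he).2.1
  · intro x hx y hy hxy
    obtain ⟨e, he, rfl⟩ := Finset.mem_image.mp hx
    obtain ⟨e', he', rfl⟩ := Finset.mem_image.mp hy
    have hne : e ≠ e' := by rintro rfl; exact hxy rfl
    have he0 : e ∈ M₀ := (Finset.mem_filter.mp (hS ▸ he)).1
    have he0' : e' ∈ M₀ := (Finset.mem_filter.mp (hS ▸ he')).1
    have h2 : e.2 ≠ e'.2 := (hM0.1.2 e he0 e' he0' hne).2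
    have h2' : (f e).2 ≠ (f e').2 := by
      rw [(hfS e he).1, (hfS e' he').1]; exact h2
    refine ⟨?_, h2'⟩
    exact (hMstar.1.2 _ (hfS e he).2.1 _ (hfS e' he').2.1
      (fun h => h2' (by rw [h]))).1
  · intro x hx
    obtain ⟨e, he, rfl⟩ := Finset.mem_image.mp hx
    refine ⟨(hfS e he).2.2, ?_⟩
    rw [(hfS e he).1]
    exact Finset.mem_image.mpr ⟨e, (Finset.mem_filter.mp (hS ▸ he)).1, rfl⟩
  · have : {e : α × β | e ∈ M₀ ∧ P e}.ncard = S.card := by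
      rw [hsetS, Set.ncard_coe_finset]
    rw [show {e : α × β | e ∈ M₀ ∧
          (∃ d : β, (e.1, d) ∈ Mstar ∧ d ∉ M₀.image Prod.snd) ∧
          (∃ c : α, (c, e.2) ∈ Mstar ∧ c ∉ M₀.image Prod.fst)} = {e : α × β | e ∈ M₀ ∧ P e} from rfl,
      this]
    apply Finset.card_le_card_of_injOn f (fun e he => Finset.mem_image_of_mem f he)
    intro e he e' he' hee
    have h1 := (hfS e he).1
    have h2 := (hfS e' he').1
    have h2eq : e.2 = e'.2 := by rw [← h1, ← h2, hee]
    by_contra hne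
    exact (hM0.1.2 e (Finset.mem_filter.mp (hS ▸ he)).1 e'
      (Finset.mem_filter.mp (hS ▸ he')).1 hne).2 h2eq
end
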